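/- arXiv:2107.12196 — 6 statements merged into one kernel-verified Lean document; each statement's English description precedes it below -/
import Mathlib

section
/- For all integers p ≥ 1 and q ≥ 2 with m = pq, the R-submodule of S/(z) generated by the residue class of the polynomial x^m − y^m is isomorphic to R/(X) as an R-module, and moreover it is a direct summand of S/(z). -/
open MvPolynomial

noncomputable section

/-- `S = ℂ[x,y]` -/
abbrev Spoly : Type := MvPolynomial Bool ℂ

/-- `R = ℂ[X,Y]` -/
abbrev Rpoly : Type := MvPolynomial (Fin 2) ℂ

def xv : Spoly := X false
def yv : Spoly := X true
def Xv : Rpoly := X 0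
def Yv : Rpoly := X 1

/-- The map `R → S`, `X ↦ (xy)^q`, `Y ↦ x^m + y^m`. -/
def phi (m q : ℕ) : Rpoly →+* Spoly :=
  (aeval ![(xv * yv) ^ q, xv ^ m + yv ^ m]).toRingHom

/-- `z = xy(x^m - y^m)`. -/
def zpol (m : ℕ) : Spoly := xv * yv * (xv ^ m - yv ^ m)

/-- Cokernel of a 2×2 matrix over `R`. -/
abbrev coker (A : Matrix (Fin 2) (Fin 2) Rpoly) : Type :=
  (Fin 2 → Rpoly) ⧸ LinearMap.range A.mulVecLin

namespace Aux

def mon (a b : ℕ) : Spoly := xv ^ a * yv ^ b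

lemma mon_mul (a b a' b' : ℕ) : mon a b * mon a' b' = mon (a+a') (b+b') := by
  simp only [mon, pow_add]; ring

lemma monomial_eq_mon (d : Bool →₀ ℕ) : monomial d (1:ℂ) = mon (d false) (d true) := by
  have hd : d = Finsupp.single false (d false) + Finsupp.single true (d true) := by
    ext b; cases b <;> simp [Finsupp.single_apply]
  rw [mon, xv, yv, X_pow_eq_monomial, X_pow_eq_monomial, monomial_mul, one_mul, ← hd]

def vab (m q a b : ℕ) : Spoly :=
  if a % m = b % m ∧ q ∣ b then (2⁻¹ : ℂ) • (mon a b - mon b a) else 0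

def E0 (m q : ℕ) : Spoly →ₗ[ℂ] Spoly :=
  (basisMonomials Bool ℂ).constr ℂ fun d => vab m q (d false) (d true)

lemma basis_apply (d : Bool →₀ ℕ) : (basisMonomials Bool ℂ) d = monomial d (1:ℂ) :=
  congrFun (coe_basisMonomials Bool ℂ) d

lemma E0_mon (m q a b : ℕ) : E0 m q (mon a b) = vab m q a b := by
  have : mon a b = (basisMonomials Bool ℂ) (Finsupp.single false a + Finsupp.single true b) := by
    rw [basis_apply, monomial_eq_mon]; simp [Finsupp.single_apply]
  rw [this, E0, Module.Basis.constr_basis]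
  simp [Finsupp.single_apply]

lemma ext_mon {L1 L2 : Spoly →ₗ[ℂ] Spoly} (h : ∀ a b, L1 (mon a b) = L2 (mon a b)) :
    L1 = L2 := by
  apply (basisMonomials Bool ℂ).ext; intro d
  rw [basis_apply, monomial_eq_mon]; exact h _ _


lemma cond_iff_add (m q c a b : ℕ) (hqc : q ∣ c) (hmc : c % m = 0) :
    ((c + a) % m = (c + b) % m ∧ q ∣ c + b) ↔ (a % m = b % m ∧ q ∣ b) := by
  constructor
  · rintro ⟨h1, h2⟩
    exact ⟨Nat.ModEq.add_left_cancel' c h1, (Nat.dvd_add_right hqc).mp h2⟩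
  · rintro ⟨h1, h2⟩
    exact ⟨Nat.ModEq.add_left c h1, (Nat.dvd_add_right hqc).mpr h2⟩

lemma mod_add_left_iff (m c a b : ℕ) : (c + a) % m = (c + b) % m ↔ a % m = b % m :=
  ⟨fun h => Nat.ModEq.add_left_cancel' c h, fun h => Nat.ModEq.add_left c h⟩

lemma E0_mulA (m q : ℕ) (s : Spoly) : E0 m q (mon q q * s) = mon q q * E0 m q s := by
  have h : (E0 m q).comp (LinearMap.mulLeft ℂ (mon q q)) =
      (LinearMap.mulLeft ℂ (mon q q)).comp (E0 m q) := by
    apply ext_mon; intro a b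
    simp only [LinearMap.comp_apply, LinearMap.mulLeft_apply, mon_mul, E0_mon]
    rw [vab, vab]
    by_cases hc : a % m = b % m ∧ q ∣ b
    · rw [if_pos hc, if_pos (by
        exact ⟨(mod_add_left_iff m q a b).mpr hc.1, (Nat.dvd_add_right (dvd_refl q)).mpr hc.2⟩)]
      rw [mul_smul_comm, mul_sub, mon_mul, mon_mul]
    · rw [if_neg hc, if_neg (by
        intro hcc
        exact hc ⟨(mod_add_left_iff m q a b).mp hcc.1,
          (Nat.dvd_add_right (dvd_refl q)).mp hcc.2⟩), mul_zero]
  exact LinearMap.ext_iff.mp h s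

lemma E0_mulB (m q : ℕ) (hqm : q ∣ m) (s : Spoly) :
    E0 m q ((mon m 0 + mon 0 m) * s) = (mon m 0 + mon 0 m) * E0 m q s := by
  have h : (E0 m q).comp (LinearMap.mulLeft ℂ (mon m 0 + mon 0 m)) =
      (LinearMap.mulLeft ℂ (mon m 0 + mon 0 m)).comp (E0 m q) := by
    apply ext_mon; intro a b
    simp only [LinearMap.comp_apply, LinearMap.mulLeft_apply, add_mul, mon_mul, map_add, E0_mon,
      Nat.add_zero, Nat.zero_add]
    rw [vab, vab, vab]
    by_cases hc : a % m = b % m ∧ q ∣ b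
    · rw [if_pos (⟨by rw [Nat.add_mod_left]; exact hc.1, hc.2⟩ : (m + a) % m = b % m ∧ q ∣ b),
        if_pos (⟨by rw [Nat.add_mod_left]; exact hc.1.symm ▸ rfl, (Nat.dvd_add_right hqm).mpr hc.2⟩ :
          a % m = (m + b) % m ∧ q ∣ m + b),
        if_pos hc]
      simp only [smul_eq_C_mul, mon, pow_zero, mul_one, one_mul, pow_add]
      ring
    · have hc1 : ¬((m + a) % m = b % m ∧ q ∣ b) := by
        intro hcc; exact hc ⟨by rw [Nat.add_mod_left] at hcc; exact hcc.1, hcc.2⟩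
      have hc2 : ¬(a % m = (m + b) % m ∧ q ∣ m + b) := by
        intro hcc
        exact hc ⟨by rw [Nat.add_mod_left] at hcc; exact hcc.1, (Nat.dvd_add_right hqm).mp hcc.2⟩
      rw [if_neg hc1, if_neg hc2, if_neg hc]
      simp
  exact LinearMap.ext_iff.mp h s

lemma phi_X0 (m q : ℕ) : phi m q Xv = mon q q := by
  simp [phi, Xv, mon, mul_pow]

lemma phi_X1 (m q : ℕ) : phi m q Yv = mon m 0 + mon 0 m := by
  simp [phi, Yv, mon]

lemma phi_C (m q : ℕ) (c : ℂ) : phi m q (C c) = C c := by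
  simp [phi]

lemma E0_phi (m q : ℕ) (hqm : q ∣ m) (r : Rpoly) :
    ∀ s : Spoly, E0 m q (phi m q r * s) = phi m q r * E0 m q s := by
  induction r using MvPolynomial.induction_on with
  | C c =>
    intro s
    rw [phi_C, ← smul_eq_C_mul, map_smul, smul_eq_C_mul]
  | add p1 p2 h1 h2 =>
    intro s
    rw [map_add, add_mul, map_add, h1, h2, add_mul]
  | mul_X r i hr =>
    intro s
    rw [map_mul (phi m q) r (X i), mul_assoc]
    have hcase : phi m q (X i) = mon q q ∨ phi m q (X i) = mon m 0 + mon 0 m := by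
      fin_cases i
      · exact Or.inl (phi_X0 m q)
      · exact Or.inr (phi_X1 m q)
    rcases hcase with hc | hc
    · rw [hc, hr, E0_mulA, mul_assoc]
    · rw [hc, hr, E0_mulB m q hqm, mul_assoc]

lemma zpol_eq (m : ℕ) : zpol m = mon (m+1) 1 - mon 1 (m+1) := by
  simp only [zpol, mon, pow_succ, pow_one]; ring

def F0 (m q : ℕ) : Spoly →ₗ[ℂ] Spoly :=
  (basisMonomials Bool ℂ).constr ℂ fun d =>
    if (d false) % m = (d true) % m ∧ q ∣ (d true) + 1 then
      (2⁻¹ : ℂ) • (mon (d false) (d true) + mon (d true) (d false)) else 0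

lemma F0_mon (m q a b : ℕ) : F0 m q (mon a b) =
    if a % m = b % m ∧ q ∣ b + 1 then (2⁻¹ : ℂ) • (mon a b + mon b a) else 0 := by
  have hf : ((Finsupp.single false a + Finsupp.single true b) : Bool →₀ ℕ) false = a := by
    simp [Finsupp.single_apply]
  have ht : ((Finsupp.single false a + Finsupp.single true b) : Bool →₀ ℕ) true = b := by
    simp [Finsupp.single_apply]
  have h : (basisMonomials Bool ℂ) (Finsupp.single false a + Finsupp.single true b) = mon a b := by
    rw [basis_apply, monomial_eq_mon, hf, ht]
  conv_lhs => rw [← h]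
  rw [F0, Module.Basis.constr_basis, hf, ht]

lemma E0_z (m q : ℕ) (hqm : q ∣ m) (s : Spoly) :
    E0 m q (zpol m * s) = zpol m * F0 m q s := by
  have h : (E0 m q).comp (LinearMap.mulLeft ℂ (zpol m)) =
      (LinearMap.mulLeft ℂ (zpol m)).comp (F0 m q) := by
    apply ext_mon; intro a b
    simp only [LinearMap.comp_apply, LinearMap.mulLeft_apply]
    rw [zpol_eq, sub_mul, mon_mul, mon_mul, map_sub, E0_mon, E0_mon, F0_mon, vab, vab]
    by_cases hc : a % m = b % m ∧ q ∣ b + 1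
    · have e1 : (m + 1 + a) % m = (1 + b) % m := by
        rw [add_assoc, Nat.add_mod_left]; exact (mod_add_left_iff m 1 a b).mpr hc.1
      have e2 : (1 + a) % m = (m + 1 + b) % m := by
        rw [add_assoc, Nat.add_mod_left]; exact (mod_add_left_iff m 1 a b).mpr hc.1
      have d1 : q ∣ 1 + b := by rw [Nat.add_comm]; exact hc.2
      have d2 : q ∣ m + 1 + b := by rw [add_assoc]; exact (Nat.dvd_add_right hqm).mpr d1
      rw [if_pos ⟨e1, d1⟩, if_pos ⟨e2, d2⟩, if_pos hc]
      simp only [smul_eq_C_mul, mon, pow_zero, mul_one, one_mul, pow_add, pow_one]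
      ring
    · have hc1 : ¬((m + 1 + a) % m = (1 + b) % m ∧ q ∣ 1 + b) := by
        rintro ⟨h1, h2⟩
        rw [add_assoc, Nat.add_mod_left] at h1
        exact hc ⟨(mod_add_left_iff m 1 a b).mp h1, by rw [Nat.add_comm] at h2; exact h2⟩
      have hc2 : ¬((1 + a) % m = (m + 1 + b) % m ∧ q ∣ m + 1 + b) := by
        rintro ⟨h1, h2⟩
        rw [add_assoc, Nat.add_mod_left] at h1
        rw [add_assoc] at h2
        exact hc ⟨(mod_add_left_iff m 1 a b).mp h1,
          by have := (Nat.dvd_add_right hqm).mp h2; rw [Nat.add_comm] at this; exact this⟩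
      rw [if_neg hc1, if_neg hc2, if_neg hc]
      simp
  exact LinearMap.ext_iff.mp h s

lemma E0_gen (m q : ℕ) (hqm : q ∣ m) :
    E0 m q (mon m 0 - mon 0 m) = mon m 0 - mon 0 m := by
  rw [map_sub, E0_mon, E0_mon, vab, vab]
  rw [if_pos ⟨by simp, dvd_zero q⟩, if_pos ⟨by simp, hqm⟩]
  have h : mon 0 m - mon m 0 = -(mon m 0 - mon 0 m) := by ring
  rw [h, smul_neg, sub_neg_eq_add, ← add_smul,
    show (2⁻¹ + 2⁻¹ : ℂ) = 1 by norm_num, one_smul]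

lemma sub_pow_ne (m : ℕ) (hm : 1 ≤ m) : (xv ^ m - yv ^ m : Spoly) ≠ 0 := by
  intro h
  have hne : ¬(Finsupp.single true m = Finsupp.single false m) := by
    intro hh
    have := congrFun (congrArg (fun f : Bool →₀ ℕ => (f : Bool → ℕ)) hh) false
    simp [Finsupp.single_apply] at this
    omega
  have hc : coeff (Finsupp.single false m) (xv ^ m - yv ^ m : Spoly) = 1 := by
    rw [coeff_sub, xv, yv, X_pow_eq_monomial, X_pow_eq_monomial, coeff_monomial, coeff_monomial,
      if_pos rfl, if_neg hne, sub_zero]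
  rw [h] at hc
  simp at hc

lemma geom_fac (m k : ℕ) : ∃ h : Spoly, xv ^ (m*k) - yv ^ (m*k) = (xv ^ m - yv ^ m) * h := by
  obtain ⟨h, hh⟩ := sub_dvd_pow_sub_pow (xv ^ m) (yv ^ m) k
  exact ⟨h, by rw [pow_mul, pow_mul]; exact hh⟩

lemma pk_id (m k : ℕ) :
    (mon m 0 + mon 0 m) * (xv ^ (m*(k+1)) - yv ^ (m*(k+1)))
      - mon m m * (xv ^ (m*k) - yv ^ (m*k)) = xv ^ (m*(k+2)) - yv ^ (m*(k+2)) := by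
  simp only [mon, pow_zero, mul_one, one_mul, pow_mul]
  ring

lemma phi_Xp (p q : ℕ) : phi (p*q) q (Xv ^ p) = mon (p*q) (p*q) := by
  rw [map_pow, phi_X0]
  rw [mon, mon, mul_pow, ← pow_mul, ← pow_mul, Nat.mul_comm q p]

lemma decomp (r : Rpoly) :
    ∃ r₁ : Rpoly, ∃ g : Polynomial ℂ, r = Xv * r₁ + Polynomial.aeval Yv g := by
  induction r using MvPolynomial.induction_on with
  | C c =>
    refine ⟨0, Polynomial.C c, ?_⟩
    simp [algebraMap_eq]
  | add p1 p2 h1 h2 =>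
    obtain ⟨r₁, g, rfl⟩ := h1
    obtain ⟨r₁', g', rfl⟩ := h2
    exact ⟨r₁ + r₁', g + g', by rw [map_add]; ring⟩
  | mul_X r i hr =>
    obtain ⟨r₁, g, rfl⟩ := hr
    have hcase : (X i : Rpoly) = Xv ∨ (X i : Rpoly) = Yv := by
      fin_cases i
      · exact Or.inl rfl
      · exact Or.inr rfl
    rcases hcase with hc | hc
    · exact ⟨Xv * r₁ + Polynomial.aeval Yv g, 0, by rw [hc, map_zero]; ring⟩
    · exact ⟨r₁ * Yv, g * Polynomial.X, by
        rw [hc, map_mul, Polynomial.aeval_X]; ring⟩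

lemma X_dvd_of_xy_dvd_phi (m q : ℕ) (hm : 1 ≤ m) (hq : 1 ≤ q) (r : Rpoly)
    (h : (xv * yv : Spoly) ∣ phi m q r) : Xv ∣ r := by
  set e0 : Bool → Polynomial ℂ := fun b => if b then 0 else Polynomial.X with he0
  have hxy : (aeval e0) (xv * yv) = 0 := by
    simp [xv, yv, he0]
  have hphir : (aeval e0) (phi m q r) = 0 := by
    obtain ⟨t, ht⟩ := h
    rw [ht, map_mul, hxy, zero_mul]
  have hcomp : (aeval e0).comp (aeval ![(xv * yv) ^ q, xv ^ m + yv ^ m]) =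
      aeval ![0, (Polynomial.X : Polynomial ℂ) ^ m] := by
    rw [comp_aeval]
    congr 1
    funext i
    fin_cases i
    · simp [hxy, zero_pow (Nat.one_le_iff_ne_zero.mp hq)]
    · simp [xv, yv, he0, zero_pow (show m ≠ 0 by omega)]
  have hgam : (aeval ![0, (Polynomial.X : Polynomial ℂ) ^ m]) r = 0 := by
    have h2 := DFunLike.congr_fun hcomp r
    rw [AlgHom.comp_apply] at h2
    rw [← h2]
    exact hphir
  obtain ⟨r₁, g, rfl⟩ := decomp r
  have hXv : (aeval ![0, (Polynomial.X : Polynomial ℂ) ^ m]) Xv = 0 := by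
    simp [Xv]
  have hYv : (aeval ![0, (Polynomial.X : Polynomial ℂ) ^ m]) Yv = Polynomial.X ^ m := by
    simp [Yv]
  rw [map_add, map_mul, hXv, zero_mul, zero_add] at hgam
  rw [← Polynomial.aeval_algHom_apply, hYv] at hgam
  have hcompz : g.comp (Polynomial.X ^ m) = 0 := by
    rw [Polynomial.comp, ← Polynomial.algebraMap_eq, ← Polynomial.aeval_def]
    exact hgam
  have hg : g = 0 := by
    rcases Polynomial.comp_eq_zero_iff.mp hcompz with h0 | ⟨_, hcon⟩
    · exact h0
    · exfalso
      have := congrArg Polynomial.natDegree hcon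
      rw [Polynomial.natDegree_X_pow, Polynomial.natDegree_C] at this
      omega
  rw [hg, map_zero, add_zero]
  exact dvd_mul_right Xv r₁

end Aux

open Aux in
set_option synthInstance.maxHeartbeats 1000000 in
set_option maxHeartbeats 4000000 in
theorem stmt1 (p q : ℕ) (hp : 1 ≤ p) (hq : 2 ≤ q) :
    letI : Module Rpoly (Spoly ⧸ Ideal.span {zpol (p * q)}) :=
      ((Ideal.Quotient.mk (Ideal.span {zpol (p * q)})).comp (phi (p * q) q)).toModule
    let M : Submodule Rpoly (Spoly ⧸ Ideal.span {zpol (p * q)}) :=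
      Submodule.span Rpoly
        {Ideal.Quotient.mk (Ideal.span {zpol (p * q)}) (xv ^ (p * q) - yv ^ (p * q))}
    Nonempty (M ≃ₗ[Rpoly] Rpoly ⧸ Ideal.span {Xv}) ∧
      ∃ N : Submodule Rpoly (Spoly ⧸ Ideal.span {zpol (p * q)}), IsCompl M N := by
  letI instQ : Module Rpoly (Spoly ⧸ Ideal.span {zpol (p * q)}) :=
    ((Ideal.Quotient.mk (Ideal.span {zpol (p * q)})).comp (phi (p * q) q)).toModule
  intro M
  have hMdef : M = Submodule.span Rpoly
      {(Ideal.Quotient.mk (Ideal.span {zpol (p * q)})) (xv ^ (p * q) - yv ^ (p * q))} := rfl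
  clear_value M
  have hq1 : 1 ≤ q := by omega
  have hqm : q ∣ p * q := dvd_mul_left q p
  have hm1 : 1 ≤ p * q := Nat.mul_le_mul hp hq1
  have hsm : ∀ (r : Rpoly) (s : Spoly), r • ((Ideal.Quotient.mk (Ideal.span {zpol (p * q)})) s) = (Ideal.Quotient.mk (Ideal.span {zpol (p * q)})) (phi (p * q) q r * s) :=
    fun r s => (map_mul (Ideal.Quotient.mk (Ideal.span {zpol (p * q)})) (phi (p * q) q r) s).symm
  -- membership of the "power sum" elements
  have pkmem : ∀ k : ℕ, (Ideal.Quotient.mk (Ideal.span {zpol (p * q)})) (xv ^ (p * q * k) - yv ^ (p * q * k)) ∈ M := by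
    intro k
    induction k using Nat.twoStepInduction with
    | zero => rw [Nat.mul_zero]; simp [hMdef]
    | one =>
      rw [Nat.mul_one, hMdef]
      exact Submodule.subset_span rfl
    | more n ih1 ih2 =>
      rw [← pk_id (p * q) n, map_sub]
      apply Submodule.sub_mem
      · rw [← phi_X1 (p * q) q, ← hsm]
        exact Submodule.smul_mem _ _ ih2
      · rw [← phi_Xp p q, ← hsm]
        exact Submodule.smul_mem _ _ ih1
  -- membership of antisymmetrized monomials
  have key2 : ∀ a b : ℕ, b ≤ a → a % (p * q) = b % (p * q) → q ∣ b →
      (Ideal.Quotient.mk (Ideal.span {zpol (p * q)})) (mon a b - mon b a) ∈ M := by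
    intro a b hba h1 h2
    have hdvd : (p * q) ∣ a - b := (Nat.modEq_iff_dvd' hba).mp (h1.symm : Nat.ModEq _ b a)
    obtain ⟨k, hk⟩ := hdvd
    have ha : a = b + p * q * k := by omega
    subst ha
    have hfac : mon (b + p * q * k) b - mon b (b + p * q * k)
        = mon b b * (xv ^ (p * q * k) - yv ^ (p * q * k)) := by
      simp only [mon, pow_add]; ring
    rw [hfac]
    cases b with
    | zero =>
      have h00 : mon 0 0 * (xv ^ (p * q * k) - yv ^ (p * q * k))
          = xv ^ (p * q * k) - yv ^ (p * q * k) := by simp [mon]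
      rw [h00]
      exact pkmem k
    | succ b' =>
      obtain ⟨hpoly, hfac2⟩ := geom_fac (p * q) k
      have hz : mon (b' + 1) (b' + 1) * (xv ^ (p * q * k) - yv ^ (p * q * k))
          = zpol (p * q) * (mon b' b' * hpoly) := by
        rw [hfac2]
        simp only [zpol, mon]
        ring
      have hzero : (Ideal.Quotient.mk (Ideal.span {zpol (p * q)})) (mon (b' + 1) (b' + 1) * (xv ^ (p * q * k) - yv ^ (p * q * k))) = 0 := by
        rw [hz, Ideal.Quotient.eq_zero_iff_mem]
        exact Ideal.mem_span_singleton.mpr (dvd_mul_right _ _)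
      rw [hzero]
      exact Submodule.zero_mem M
  have key2' : ∀ a b : ℕ, a % (p * q) = b % (p * q) → q ∣ b →
      (Ideal.Quotient.mk (Ideal.span {zpol (p * q)})) (mon a b - mon b a) ∈ M := by
    intro a b h1 h2
    rcases le_total b a with hba | hab
    · exact key2 a b hba h1 h2
    · have h2a : q ∣ a := by
        have hmod : Nat.ModEq q a b := Nat.ModEq.of_dvd hqm (h1 : Nat.ModEq _ a b)
        exact (Nat.ModEq.dvd_iff hmod dvd_rfl).mpr h2
      have hneg : mon a b - mon b a = -(mon b a - mon a b) := by ring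
      rw [hneg, map_neg]
      exact Submodule.neg_mem _ (key2 b a hab h1.symm h2a)
  -- the averaging operator descends to the quotient
  have hEz : ∀ u ∈ Ideal.span {zpol (p * q)}, E0 (p * q) q u ∈ Ideal.span {zpol (p * q)} := by
    intro u hu
    obtain ⟨t, rfl⟩ := Ideal.mem_span_singleton.mp hu
    rw [E0_z (p * q) q hqm t]
    exact Ideal.mem_span_singleton.mpr (dvd_mul_right _ _)
  have hsound : ∀ s t : Spoly, Submodule.quotientRel (Ideal.span {zpol (p * q)}) s t →
      (Ideal.Quotient.mk (Ideal.span {zpol (p * q)})) (E0 (p * q) q s) = (Ideal.Quotient.mk (Ideal.span {zpol (p * q)})) (E0 (p * q) q t) := by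
    intro s t hst
    rw [Submodule.quotientRel_def] at hst
    rw [Ideal.Quotient.eq, ← map_sub]
    exact hEz _ hst
  let Ebar : (Spoly ⧸ Ideal.span {zpol (p * q)}) →ₗ[Rpoly] (Spoly ⧸ Ideal.span {zpol (p * q)}) := {
    toFun := fun x => Quotient.liftOn' x (fun s => (Ideal.Quotient.mk (Ideal.span {zpol (p * q)})) (E0 (p * q) q s)) hsound
    map_add' := by
      intro x y
      obtain ⟨s, rfl⟩ := Ideal.Quotient.mk_surjective x
      obtain ⟨t, rfl⟩ := Ideal.Quotient.mk_surjective y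
      show (Ideal.Quotient.mk (Ideal.span {zpol (p * q)})) (E0 (p * q) q (s + t)) = (Ideal.Quotient.mk (Ideal.span {zpol (p * q)})) (E0 (p * q) q s) + (Ideal.Quotient.mk (Ideal.span {zpol (p * q)})) (E0 (p * q) q t)
      rw [map_add, map_add]
    map_smul' := by
      intro r x
      obtain ⟨s, rfl⟩ := Ideal.Quotient.mk_surjective x
      show (Ideal.Quotient.mk (Ideal.span {zpol (p * q)})) (E0 (p * q) q (phi (p * q) q r * s)) = r • (Ideal.Quotient.mk (Ideal.span {zpol (p * q)})) (E0 (p * q) q s)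
      rw [E0_phi (p * q) q hqm r s, ← hsm]
  }
  have hEbar_mk : ∀ s : Spoly, Ebar ((Ideal.Quotient.mk (Ideal.span {zpol (p * q)})) s) = (Ideal.Quotient.mk (Ideal.span {zpol (p * q)})) (E0 (p * q) q s) := fun _ => rfl
  -- Ebar maps into M
  have hrange : ∀ x, Ebar x ∈ M := by
    intro x
    obtain ⟨s, rfl⟩ := Ideal.Quotient.mk_surjective x
    rw [hEbar_mk]
    induction s using MvPolynomial.induction_on' with
    | add s t hs ht =>
      rw [map_add, map_add]
      exact Submodule.add_mem _ hs ht
    | monomial u a =>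
      have hmono : (monomial u a : Spoly) = C a * mon (u false) (u true) := by
        rw [← monomial_eq_mon, C_mul_monomial, mul_one]
      have h1' : E0 (p * q) q (monomial u a) = a • vab (p * q) q (u false) (u true) := by
        rw [hmono, ← smul_eq_C_mul, map_smul, E0_mon]
      rw [h1', smul_eq_C_mul, ← phi_C (p * q) q a, ← hsm]
      apply Submodule.smul_mem
      by_cases hc : (u false) % (p * q) = (u true) % (p * q) ∧ q ∣ (u true)
      · rw [vab, if_pos hc, smul_eq_C_mul, ← phi_C (p * q) q (2⁻¹ : ℂ), ← hsm]
        exact Submodule.smul_mem _ _ (key2' _ _ hc.1 hc.2)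
      · rw [vab, if_neg hc, map_zero]
        exact Submodule.zero_mem M
  -- Ebar fixes the generator and M
  have hEg : Ebar ((Ideal.Quotient.mk (Ideal.span {zpol (p * q)})) (xv ^ (p * q) - yv ^ (p * q))) = (Ideal.Quotient.mk (Ideal.span {zpol (p * q)})) (xv ^ (p * q) - yv ^ (p * q)) := by
    rw [hEbar_mk]
    have hxy : (xv ^ (p * q) - yv ^ (p * q) : Spoly) = mon (p * q) 0 - mon 0 (p * q) := by
      simp [mon]
    rw [hxy, E0_gen (p * q) q hqm]
  have hMfix : ∀ x : M, (Ebar.codRestrict M hrange) x = x := by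
    intro x
    apply Subtype.ext
    rw [LinearMap.codRestrict_apply]
    have hx2 : (x : Spoly ⧸ Ideal.span {zpol (p * q)}) ∈ Submodule.span Rpoly
        {Ideal.Quotient.mk (Ideal.span {zpol (p * q)}) (xv ^ (p * q) - yv ^ (p * q))} := by
      rw [← hMdef]; exact x.2
    obtain ⟨r, hr⟩ := Submodule.mem_span_singleton.mp hx2
    have h3 : Ebar (r • (Ideal.Quotient.mk (Ideal.span {zpol (p * q)})
        (xv ^ (p * q) - yv ^ (p * q)))) = r • (Ideal.Quotient.mk (Ideal.span {zpol (p * q)})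
        (xv ^ (p * q) - yv ^ (p * q))) := by
      rw [map_smul, hEg]
    rw [hr] at h3
    exact h3
  constructor
  · -- the isomorphism with R/(X)
    let ell := LinearMap.toSpanSingleton Rpoly (Spoly ⧸ Ideal.span {zpol (p * q)})
      ((Ideal.Quotient.mk (Ideal.span {zpol (p * q)})) (xv ^ (p * q) - yv ^ (p * q)))
    have hker : LinearMap.ker ell = Ideal.span {Xv} := by
      apply le_antisymm
      · intro r hr
        rw [LinearMap.mem_ker] at hr
        rw [show ell r = r • ((Ideal.Quotient.mk (Ideal.span {zpol (p * q)})) (xv ^ (p * q) - yv ^ (p * q))) from rfl, hsm,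
          Ideal.Quotient.eq_zero_iff_mem, Ideal.mem_span_singleton] at hr
        obtain ⟨t, ht⟩ := hr
        have hcan : phi (p * q) q r = xv * yv * t := by
          apply mul_right_cancel₀ (sub_pow_ne (p * q) hm1)
          rw [ht, zpol]
          ring
        exact Ideal.mem_span_singleton.mpr
          (X_dvd_of_xy_dvd_phi (p * q) q hm1 hq1 r ⟨t, hcan⟩)
      · apply Ideal.span_le.mpr
        intro x hx
        rcases hx with rfl
        rw [SetLike.mem_coe, LinearMap.mem_ker,
          show ell Xv = Xv • ((Ideal.Quotient.mk (Ideal.span {zpol (p * q)})) (xv ^ (p * q) - yv ^ (p * q))) from rfl, hsm, phi_X0,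
          Ideal.Quotient.eq_zero_iff_mem, Ideal.mem_span_singleton]
        obtain ⟨q', hq'⟩ : ∃ q', q = q' + 1 := ⟨q - 1, by omega⟩
        have hmon : mon q q = (xv * yv) * mon q' q' := by
          rw [hq']; simp only [mon]; ring
        exact ⟨mon q' q', by rw [hmon, zpol]; ring⟩
    have hMr : M = LinearMap.range ell := by
      rw [hMdef]
      exact LinearMap.span_singleton_eq_range Rpoly _ _
    exact ⟨(LinearEquiv.ofEq M (LinearMap.range ell) hMr) ≪≫ₗ
      ell.quotKerEquivRange.symm ≪≫ₗ Submodule.quotEquivOfEq _ _ hker⟩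
  · exact ⟨LinearMap.ker (Ebar.codRestrict M hrange), LinearMap.isCompl_of_proj hMfix⟩
end
end

section
/- For all integers p ≥ 1 and q ≥ 2 with m = pq, the R-submodule of S/(z) generated by the residue class of the polynomial xy is isomorphic to R/(Y² − 4X^p) as an R-module, and moreover it is a direct summand of S/(z). -/
open MvPolynomial

noncomputable section

lemma phi_Xv (m q : ℕ) : phi m q Xv = (xv*yv)^q := by simp [phi, Xv]
lemma phi_Yv (m q : ℕ) : phi m q Yv = xv^m + yv^m := by simp [phi, Yv]
lemma phi_C (m q : ℕ) (c : ℂ) : phi m q (C c) = C c := by simp [phi]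
def fe (a b : ℕ) : Bool →₀ ℕ := Finsupp.single false a + Finsupp.single true b
lemma fe_false (a b : ℕ) : fe a b false = a := by simp [fe]
lemma fe_true (a b : ℕ) : fe a b true = b := by simp [fe]
lemma xy_pow_eq (a b : ℕ) : (xv^a * yv^b : Spoly) = monomial (fe a b) 1 := by
  rw [xv, yv, X_pow_eq_monomial, X_pow_eq_monomial, monomial_mul, fe, one_mul]
lemma fe_eta (d : Bool →₀ ℕ) : fe (d false) (d true) = d := by
  ext b; cases b <;> simp [fe]
lemma mono_xy (d : Bool →₀ ℕ) (c : ℂ) :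
    (monomial d c : Spoly) = c • (xv^(d false) * yv^(d true)) := by
  rw [xy_pow_eq, fe_eta]; simp [smul_monomial]
def tgt' (m q a b : ℕ) : Spoly :=
  if a % m = b % m ∧ a % q = 1 % q then
    (2⁻¹ : ℂ) • (xv ^ a * yv ^ b + xv ^ b * yv ^ a) else 0
def eproj (m q : ℕ) : Spoly →ₗ[ℂ] Spoly :=
  (basisMonomials Bool ℂ).constr ℂ (fun d => tgt' m q (d false) (d true))
lemma eproj_monomial (m q : ℕ) (d : Bool →₀ ℕ) (c : ℂ) :
    eproj m q (monomial d c) = c • tgt' m q (d false) (d true) := by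
  have h1 : (monomial d c : Spoly) = c • ((basisMonomials Bool ℂ) d) := by
    rw [coe_basisMonomials]; simp [smul_monomial]
  rw [h1, map_smul]
  rw [eproj, Module.Basis.constr_basis]
lemma eproj_ab (m q a b : ℕ) : eproj m q (xv^a*yv^b) = tgt' m q a b := by
  rw [xy_pow_eq, eproj_monomial, fe_false, fe_true, one_smul]

lemma modadd {n a b : ℕ} (c : ℕ) : (c+a) % n = (c+b) % n ↔ a % n = b % n :=
  ⟨fun h => Nat.ModEq.add_left_cancel' c h, fun h => Nat.ModEq.add_left c h⟩

lemma modq_add_m (p q a : ℕ) : (p*q + a) % q = a % q := by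
  rw [mul_comm]; exact Nat.mul_add_mod q p a

-- commute with multiplication by phi Xv
lemma eproj_phiX (p q : ℕ) (s : Spoly) :
    eproj (p*q) q (phi (p*q) q Xv * s) = phi (p*q) q Xv * eproj (p*q) q s := by
  induction s using MvPolynomial.induction_on' with
  | add s t hs ht => rw [mul_add, map_add, map_add, mul_add, hs, ht]
  | monomial d c =>
    rw [mono_xy, mul_smul_comm, map_smul, map_smul, mul_smul_comm]
    congr 1
    set a := d false; set b := d true
    have key : phi (p*q) q Xv * (xv^a*yv^b) = xv^(q+a)*yv^(q+b) := by
      rw [phi_Xv]; ring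
    have hc : ((q+a) % (p*q) = (q+b) % (p*q) ∧ (q+a) % q = 1 % q)
        ↔ (a % (p*q) = b % (p*q) ∧ a % q = 1 % q) :=
      and_congr (modadd q) (by rw [Nat.add_mod_left])
    rw [key, eproj_ab, eproj_ab, phi_Xv, tgt', tgt']
    by_cases h : a % (p*q) = b % (p*q) ∧ a % q = 1 % q
    · rw [if_pos h, if_pos (hc.mpr h), mul_smul_comm]; congr 1; ring
    · rw [if_neg h, if_neg (fun hx => h (hc.mp hx)), mul_zero]

lemma eproj_phiY (p q : ℕ) (s : Spoly) :
    eproj (p*q) q (phi (p*q) q Yv * s) = phi (p*q) q Yv * eproj (p*q) q s := by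
  induction s using MvPolynomial.induction_on' with
  | add s t hs ht => rw [mul_add, map_add, map_add, mul_add, hs, ht]
  | monomial d c =>
    rw [mono_xy, mul_smul_comm, map_smul, map_smul, mul_smul_comm]
    congr 1
    set a := d false; set b := d true
    have key : phi (p*q) q Yv * (xv^a*yv^b) = xv^(p*q+a)*yv^b + xv^a*yv^(p*q+b) := by
      rw [phi_Yv]; ring
    have hc1 : ((p*q+a) % (p*q) = b % (p*q) ∧ (p*q+a) % q = 1 % q)
        ↔ (a % (p*q) = b % (p*q) ∧ a % q = 1 % q) :=
      and_congr (by rw [Nat.add_mod_left]) (by rw [modq_add_m])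
    have hc2 : (a % (p*q) = (p*q+b) % (p*q) ∧ a % q = 1 % q)
        ↔ (a % (p*q) = b % (p*q) ∧ a % q = 1 % q) :=
      and_congr (by rw [Nat.add_mod_left]) Iff.rfl
    rw [key, map_add, eproj_ab, eproj_ab, eproj_ab, phi_Yv, tgt', tgt', tgt']
    by_cases h : a % (p*q) = b % (p*q) ∧ a % q = 1 % q
    · rw [if_pos (hc1.mpr h), if_pos (hc2.mpr h), if_pos h, mul_smul_comm, ← smul_add]
      congr 1; ring
    · rw [if_neg (fun hx => h (hc1.mp hx)), if_neg (fun hx => h (hc2.mp hx)), if_neg h,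
        add_zero, mul_zero]

-- general commutation
lemma eproj_phi_mul (p q : ℕ) (r : Rpoly) (s : Spoly) :
    eproj (p*q) q (phi (p*q) q r * s) = phi (p*q) q r * eproj (p*q) q s := by
  induction r using MvPolynomial.induction_on generalizing s with
  | C c => rw [phi_C, C_mul', map_smul, C_mul']
  | add r t hr ht => rw [map_add, add_mul, map_add, hr, ht, add_mul]
  | mul_X r i hr =>
    rw [map_mul (phi (p*q) q) r (X i), mul_assoc]
    fin_cases i
    · show eproj (p*q) q (phi (p*q) q r * (phi (p*q) q Xv * s))
        = phi (p*q) q r * phi (p*q) q Xv * eproj (p*q) q s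
      rw [hr, eproj_phiX p q s]; ring
    · show eproj (p*q) q (phi (p*q) q r * (phi (p*q) q Yv * s))
        = phi (p*q) q r * phi (p*q) q Yv * eproj (p*q) q s
      rw [hr, eproj_phiY p q s]; ring

lemma eproj_xy (p q : ℕ) : eproj (p*q) q (xv*yv) = xv*yv := by
  have h : (xv*yv : Spoly) = xv^1*yv^1 := by ring
  rw [h, eproj_ab, tgt', if_pos ⟨rfl, rfl⟩, ← two_smul ℂ (xv^1*yv^1), smul_smul]
  norm_num

def pr (p : ℕ) : ℕ → Rpoly
  | 0 => 2
  | 1 => Yv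
  | (d+2) => Yv * pr p (d+1) - Xv ^ p * pr p d
def hr (p : ℕ) : ℕ → Rpoly
  | 0 => 0
  | 1 => 1
  | (d+2) => Yv * hr p (d+1) - Xv ^ p * hr p d
lemma phi_pr (p q : ℕ) (d : ℕ) :
    phi (p*q) q (pr p d) = xv^(p*q*d) + yv^(p*q*d) := by
  induction d using Nat.strong_induction_on with
  | _ d ih =>
    match d with
    | 0 => simp [pr, map_ofNat]; norm_num
    | 1 => simp [pr, phi_Yv]
    | (d+2) =>
      rw [pr, map_sub, map_mul, map_mul, map_pow, phi_Xv, phi_Yv]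
      linear_combination (xv^(p*q)+yv^(p*q)) * ih (d+1) (by omega) - ((xv*yv)^q)^p * ih d (by omega)
lemma phi_hr (p q : ℕ) (d : ℕ) :
    (xv^(p*q) - yv^(p*q)) * phi (p*q) q (hr p d) = xv^(p*q*d) - yv^(p*q*d) := by
  induction d using Nat.strong_induction_on with
  | _ d ih =>
    match d with
    | 0 => simp [hr]
    | 1 => simp [hr]
    | (d+2) =>
      rw [hr, map_sub, map_mul, map_mul, map_pow, phi_Xv, phi_Yv]
      linear_combination (xv^(p*q)+yv^(p*q)) * ih (d+1) (by omega) - ((xv*yv)^q)^p * ih d (by omega)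

lemma L1aux (p q : ℕ) (hq : 2 ≤ q) {a b : ℕ} (hab : a ≤ b)
    (h1 : a % (p*q) = b % (p*q)) (h2 : a % q = 1 % q) :
    ∃ g : Rpoly, xv^a*yv^b + xv^b*yv^a = xv*yv * phi (p*q) q g := by
  obtain ⟨d, hd⟩ := (Nat.modEq_iff_dvd' hab).mp h1
  have hdm := Nat.div_add_mod a q
  have hone : (1:ℕ) % q = 1 := Nat.one_mod_eq_one.mpr (by omega)
  have ha : a = q * (a/q) + 1 := by omega
  have hb : b = a + p*q*d := by omega
  set c := a / q
  refine ⟨Xv^c * pr p d, ?_⟩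
  rw [map_mul, map_pow, phi_Xv, phi_pr, hb, ha]
  ring

lemma L2aux (p q : ℕ) {a b : ℕ} (hab : a ≤ b)
    (h1 : a % (p*q) = b % (p*q)) (h2 : a % q = 0) :
    ∃ g : Rpoly, xv^a*yv^b - xv^b*yv^a = (xv^(p*q) - yv^(p*q)) * phi (p*q) q g := by
  obtain ⟨d, hd⟩ := (Nat.modEq_iff_dvd' hab).mp h1
  have hdm := Nat.div_add_mod a q
  have ha : a = q * (a/q) := by omega
  have hb : b = a + p*q*d := by omega
  set c := a / q
  refine ⟨-(Xv^c * hr p d), ?_⟩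
  rw [map_neg, map_mul, map_pow, phi_Xv]
  have hh := phi_hr p q d
  rw [hb, ha]
  linear_combination (((xv*yv)^q)^c) * hh

lemma qdvd (p q : ℕ) : q ∣ p * q := dvd_mul_left q p

lemma L1 (p q : ℕ) (hq : 2 ≤ q) {a b : ℕ}
    (h1 : a % (p*q) = b % (p*q)) (h2 : a % q = 1 % q) :
    ∃ g : Rpoly, xv^a*yv^b + xv^b*yv^a = xv*yv * phi (p*q) q g := by
  rcases le_total a b with hab | hab
  · exact L1aux p q hq hab h1 h2
  · have h2b : b % q = 1 % q := by
      have h' : a % q = b % q := Nat.ModEq.of_dvd (qdvd p q) h1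
      omega
    obtain ⟨g, hg⟩ := L1aux p q hq hab h1.symm h2b
    exact ⟨g, by rw [add_comm]; exact hg⟩

lemma L2 (p q : ℕ) {a b : ℕ}
    (h1 : a % (p*q) = b % (p*q)) (h2 : a % q = 0) :
    ∃ g : Rpoly, xv^a*yv^b - xv^b*yv^a = (xv^(p*q) - yv^(p*q)) * phi (p*q) q g := by
  rcases le_total a b with hab | hab
  · exact L2aux p q hab h1 h2
  · have h2b : b % q = 0 := by
      have h' : a % q = b % q := Nat.ModEq.of_dvd (qdvd p q) h1
      omega
    obtain ⟨g, hg⟩ := L2aux p q hab h1.symm h2b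
    refine ⟨-g, ?_⟩
    rw [map_neg]
    linear_combination -hg

lemma eproj_idem (p q : ℕ) (s : Spoly) :
    eproj (p*q) q (eproj (p*q) q s) = eproj (p*q) q s := by
  induction s using MvPolynomial.induction_on' with
  | add s t hs ht => rw [map_add, map_add, hs, ht]
  | monomial d c =>
    rw [eproj_monomial, map_smul]
    congr 1
    set a := d false; set b := d true
    rw [tgt']
    by_cases h : a % (p*q) = b % (p*q) ∧ a % q = 1 % q
    · have hba : b % (p*q) = a % (p*q) ∧ b % q = 1 % q := by
        have h' : a % q = b % q := Nat.ModEq.of_dvd (qdvd p q) h.1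
        exact ⟨h.1.symm, by omega⟩
      rw [if_pos h, map_smul, map_add, eproj_ab, eproj_ab, tgt', tgt', if_pos h, if_pos hba,
        show xv^b*yv^a + xv^a*yv^b = xv^a*yv^b + xv^b*yv^a from add_comm _ _,
        ← two_smul ℂ ((2:ℂ)⁻¹ • (xv^a*yv^b + xv^b*yv^a)), smul_smul, smul_smul]
      norm_num
    · rw [if_neg h, map_zero]

lemma eproj_mem (p q : ℕ) (hq : 2 ≤ q) (s : Spoly) :
    ∃ g : Rpoly, eproj (p*q) q s = xv*yv * phi (p*q) q g := by
  induction s using MvPolynomial.induction_on' with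
  | add s t hs ht =>
    obtain ⟨g1, h1⟩ := hs; obtain ⟨g2, h2⟩ := ht
    exact ⟨g1 + g2, by rw [map_add, h1, h2, map_add]; ring⟩
  | monomial d c =>
    rw [eproj_monomial]
    set a := d false; set b := d true
    rw [tgt']
    by_cases h : a % (p*q) = b % (p*q) ∧ a % q = 1 % q
    · obtain ⟨g, hg⟩ := L1 p q hq h.1 h.2
      refine ⟨C (c * 2⁻¹) * g, ?_⟩
      rw [if_pos h, hg, map_mul, phi_C, smul_smul, smul_eq_C_mul]
      ring
    · exact ⟨0, by rw [if_neg h, smul_zero, map_zero, mul_zero]⟩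

lemma eproj_z (p q : ℕ) (s : Spoly) :
    ∃ g : Rpoly, eproj (p*q) q (zpol (p*q) * s)
      = xv*yv * phi (p*q) q (Yv^2 - 4*Xv^p) * phi (p*q) q g := by
  induction s using MvPolynomial.induction_on' with
  | add s t hs ht =>
    obtain ⟨g1, h1⟩ := hs; obtain ⟨g2, h2⟩ := ht
    exact ⟨g1 + g2, by rw [mul_add, map_add, h1, h2, map_add]; ring⟩
  | monomial d c =>
    rw [mono_xy, mul_smul_comm, map_smul]
    set a := d false; set b := d true
    have key : zpol (p*q) * (xv^a*yv^b) = xv^(a+(p*q)+1)*yv^(b+1) - xv^(a+1)*yv^(b+(p*q)+1) := by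
      rw [zpol]; ring
    rw [key, map_sub, eproj_ab, eproj_ab, tgt', tgt']
    have e1 : (a+(p*q)+1) % (p*q) = (b+1) % (p*q) ↔ a % (p*q) = b % (p*q) := by
      rw [show a+(p*q)+1 = (a+1)+(p*q) by ring, Nat.add_mod_right]
      constructor
      · intro hx
        exact Nat.ModEq.add_right_cancel' 1 hx
      · intro hx
        exact Nat.ModEq.add_right 1 hx
    have e2 : (a+(p*q)+1) % q = 1 % q ↔ a % q = 0 := by
      rw [show a+(p*q)+1 = (a+1)+p*q by ring, Nat.add_mul_mod_self_right]
      constructor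
      · intro hx
        have h' : (a+1) % q = (0+1) % q ↔ a % q = 0 % q :=
          ⟨Nat.ModEq.add_right_cancel' 1, Nat.ModEq.add_right 1⟩
        simpa using h'.mp (by simpa using hx)
      · intro hx
        have h' : (a+1) % q = (0+1) % q ↔ a % q = 0 % q :=
          ⟨Nat.ModEq.add_right_cancel' 1, Nat.ModEq.add_right 1⟩
        simpa using h'.mpr (by simpa using hx)
    have e3 : (a+1) % (p*q) = (b+(p*q)+1) % (p*q) ↔ a % (p*q) = b % (p*q) := by
      rw [show b+(p*q)+1 = (b+1)+(p*q) by ring, Nat.add_mod_right]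
      constructor
      · intro hx
        exact Nat.ModEq.add_right_cancel' 1 hx
      · intro hx
        exact Nat.ModEq.add_right 1 hx
    have e4 : (a+1) % q = 1 % q ↔ a % q = 0 := by
      constructor
      · intro hx
        have h' : (a+1) % q = (0+1) % q ↔ a % q = 0 % q :=
          ⟨Nat.ModEq.add_right_cancel' 1, Nat.ModEq.add_right 1⟩
        simpa using h'.mp (by simpa using hx)
      · intro hx
        have h' : (a+1) % q = (0+1) % q ↔ a % q = 0 % q :=
          ⟨Nat.ModEq.add_right_cancel' 1, Nat.ModEq.add_right 1⟩
        simpa using h'.mpr (by simpa using hx)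
    by_cases h : a % (p*q) = b % (p*q) ∧ a % q = 0
    · obtain ⟨g0, hg0⟩ := L2 p q h.1 h.2
      refine ⟨C c * (C 2⁻¹ * g0), ?_⟩
      rw [if_pos ⟨e1.mpr h.1, e2.mpr h.2⟩, if_pos ⟨e3.mpr h.1, e4.mpr h.2⟩,
        map_mul, map_mul, phi_C, phi_C, map_sub, map_pow, phi_Yv, map_mul, map_ofNat, map_pow, phi_Xv,
        smul_eq_C_mul, smul_eq_C_mul, smul_eq_C_mul]
      linear_combination (C c * C (2:ℂ)⁻¹ * (xv*yv) * (xv^(p*q) - yv^(p*q))) * hg0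
    · have h1 : ¬((a+(p*q)+1) % (p*q) = (b+1) % (p*q) ∧ (a+(p*q)+1) % q = 1 % q) := by
        intro hx; exact h ⟨e1.mp hx.1, e2.mp hx.2⟩
      have h2 : ¬((a+1) % (p*q) = (b+(p*q)+1) % (p*q) ∧ (a+1) % q = 1 % q) := by
        intro hx; exact h ⟨e3.mp hx.1, e4.mp hx.2⟩
      exact ⟨0, by rw [if_neg h1, if_neg h2, map_zero, mul_zero, sub_zero, smul_zero]⟩

lemma exists_point (m q : ℕ) (hm : 1 ≤ m) (hq : 1 ≤ q) (u v : ℂ) :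
    ∃ x₀ y₀ : ℂ, (x₀*y₀)^q = u ∧ x₀^m + y₀^m = v := by
  by_cases hu : u = 0
  · obtain ⟨x₀, hx⟩ := IsAlgClosed.exists_pow_nat_eq v (n := m) (by omega)
    exact ⟨x₀, 0, by rw [mul_zero, zero_pow (by omega), hu],
      by rw [zero_pow (by omega), add_zero, hx]⟩
  · obtain ⟨c, hc⟩ := IsAlgClosed.exists_pow_nat_eq u (n := q) (by omega)
    have hc0 : c ≠ 0 := by rintro rfl; rw [zero_pow (by omega)] at hc; exact hu hc.symm
    obtain ⟨s, hs⟩ := IsAlgClosed.exists_pow_nat_eq (v^2 - 4*c^m) (n := 2) (by omega)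
    set t : ℂ := (v + s)/2 with htdef
    have hkey : t * (v - t) = c^m := by
      rw [htdef]; field_simp; linear_combination (-1 : ℂ) * hs
    have ht0 : t ≠ 0 := by
      rintro h0; rw [h0, zero_mul] at hkey
      exact pow_ne_zero m hc0 hkey.symm
    obtain ⟨x₀, hx⟩ := IsAlgClosed.exists_pow_nat_eq t (n := m) (by omega)
    have hx0 : x₀ ≠ 0 := by rintro rfl; rw [zero_pow (by omega)] at hx; exact ht0 hx.symm
    refine ⟨x₀, c/x₀, ?_, ?_⟩
    · rw [show x₀ * (c/x₀) = c by field_simp, hc]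
    · rw [div_pow, hx]
      field_simp
      linear_combination -hkey
lemma phi_inj (p q : ℕ) (hp : 1 ≤ p) (hq : 2 ≤ q) : Function.Injective (phi (p*q) q) := by
  have hm : 1 ≤ p*q := Nat.mul_pos (by omega) (by omega)
  intro r r' h
  apply MvPolynomial.funext
  intro w
  obtain ⟨x₀, y₀, hu, hv⟩ := exists_point (p*q) q hm (by omega) (w 0) (w 1)
  set ev : Bool → ℂ := fun b => if b then y₀ else x₀ with hev
  have key : ∀ g : Rpoly, eval ev (phi (p*q) q g) = eval w g := by
    intro g
    induction g using MvPolynomial.induction_on with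
    | C c => rw [phi_C]; simp
    | add g1 g2 h1 h2 => rw [map_add, map_add, map_add, h1, h2]
    | mul_X g i hg =>
      rw [map_mul, map_mul, map_mul, hg]
      congr 1
      fin_cases i
      · show eval ev (phi (p*q) q Xv) = eval w (X 0)
        rw [phi_Xv]
        simp only [eval_X, map_pow, map_mul]
        rw [show eval ev xv = x₀ from by simp [xv, hev], show eval ev yv = y₀ from by simp [yv, hev]]
        exact hu
      · show eval ev (phi (p*q) q Yv) = eval w (X 1)
        rw [phi_Yv]
        simp only [eval_X, map_pow, map_add]
        rw [show eval ev xv = x₀ from by simp [xv, hev], show eval ev yv = y₀ from by simp [yv, hev]]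
        exact hv
  rw [← key r, ← key r', h]


set_option maxHeartbeats 2000000 in
set_option synthInstance.maxHeartbeats 1000000 in
theorem stmt2 (p q : ℕ) (hp : 1 ≤ p) (hq : 2 ≤ q) :
    letI : Module Rpoly (Spoly ⧸ Ideal.span {zpol (p * q)}) :=
      ((Ideal.Quotient.mk (Ideal.span {zpol (p * q)})).comp (phi (p * q) q)).toModule
    let M : Submodule Rpoly (Spoly ⧸ Ideal.span {zpol (p * q)}) :=
      Submodule.span Rpoly {Ideal.Quotient.mk (Ideal.span {zpol (p * q)}) (xv * yv)}
    Nonempty (M ≃ₗ[Rpoly] Rpoly ⧸ Ideal.span {Yv ^ 2 - 4 * Xv ^ p}) ∧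
      ∃ N : Submodule Rpoly (Spoly ⧸ Ideal.span {zpol (p * q)}), IsCompl M N := by
  letI instM : Module Rpoly (Spoly ⧸ Ideal.span {zpol (p * q)}) :=
    ((Ideal.Quotient.mk (Ideal.span {zpol (p * q)})).comp (phi (p * q) q)).toModule
  intro M
  have hxy0 : (xv*yv : Spoly) ≠ 0 := mul_ne_zero (X_ne_zero _) (X_ne_zero _)
  have hsmul : ∀ (r : Rpoly) (s : Spoly),
      (r • (Ideal.Quotient.mk (Ideal.span {zpol (p*q)}) s)
          : Spoly ⧸ Ideal.span {zpol (p*q)})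
        = Ideal.Quotient.mk (Ideal.span {zpol (p*q)}) (phi (p*q) q r * s) := by
    intro r s
    show (Ideal.Quotient.mk _) (phi (p*q) q r) * (Ideal.Quotient.mk _ s) = _
    rw [← map_mul]
  have hzero : ∀ s : Spoly,
      Ideal.Quotient.mk (Ideal.span {zpol (p*q)}) s = 0 ↔ ∃ t, s = zpol (p*q) * t := by
    intro s
    rw [Ideal.Quotient.eq_zero_iff_mem, Ideal.mem_span_singleton]
    exact Iff.rfl
  have hxyz : xv*yv * phi (p*q) q (Yv^2 - 4*Xv^p) = zpol (p*q) * (xv^(p*q) - yv^(p*q)) := by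
    rw [map_sub, map_pow, phi_Yv, map_mul, map_ofNat, map_pow, phi_Xv, zpol]; ring
  set ψ : Rpoly →ₗ[Rpoly] (Spoly ⧸ Ideal.span {zpol (p*q)}) :=
    LinearMap.toSpanSingleton Rpoly _
      (Ideal.Quotient.mk (Ideal.span {zpol (p*q)}) (xv*yv)) with hψdef
  have hψr : ∀ r : Rpoly,
      ψ r = Ideal.Quotient.mk (Ideal.span {zpol (p*q)}) (phi (p*q) q r * (xv*yv)) := by
    intro r
    rw [hψdef, LinearMap.toSpanSingleton_apply, hsmul]
  have hker : LinearMap.ker ψ = Ideal.span {Yv^2 - 4*Xv^p} := by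
    ext r
    rw [LinearMap.mem_ker, hψr, Ideal.mem_span_singleton]
    constructor
    · intro h0
      obtain ⟨t, ht⟩ := (hzero _).mp h0
      obtain ⟨g, hg⟩ := eproj_z p q t
      have h1 : eproj (p*q) q (phi (p*q) q r * (xv*yv)) = phi (p*q) q r * (xv*yv) := by
        rw [eproj_phi_mul, eproj_xy]
      rw [ht] at h1
      rw [hg] at h1
      have h2 : xv*yv * phi (p*q) q r
          = xv*yv * phi (p*q) q ((Yv^2 - 4*Xv^p) * g) := by
        rw [map_mul]; linear_combination ht - h1
      exact ⟨g, phi_inj p q hp hq (mul_left_cancel₀ hxy0 h2)⟩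
    · rintro ⟨g, rfl⟩
      apply (hzero _).mpr
      refine ⟨(xv^(p*q) - yv^(p*q)) * phi (p*q) q g, ?_⟩
      rw [map_mul]
      linear_combination (phi (p*q) q g) * hxyz
  have hrange : LinearMap.range ψ = M := by
    show LinearMap.range ψ
      = Submodule.span Rpoly {Ideal.Quotient.mk (Ideal.span {zpol (p*q)}) (xv*yv)}
    exact (LinearMap.span_singleton_eq_range Rpoly _ _).symm
  constructor
  · exact ⟨(LinearEquiv.ofEq _ _ hrange.symm).trans
      ((ψ.quotKerEquivRange).symm.trans (Submodule.quotEquivOfEq _ _ hker))⟩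
  · refine ⟨{ carrier := {x | ∃ s, Ideal.Quotient.mk (Ideal.span {zpol (p*q)}) s = x
                ∧ eproj (p*q) q s = 0}
            , add_mem' := ?_, zero_mem' := ?_, smul_mem' := ?_}, ⟨?_, ?_⟩⟩
    · rintro x y ⟨s, rfl, hs⟩ ⟨t, rfl, ht⟩
      exact ⟨s + t, by rw [map_add], by rw [map_add, hs, ht, add_zero]⟩
    · exact ⟨0, by rw [map_zero], by rw [map_zero]⟩
    · rintro r x ⟨s, rfl, hs⟩
      exact ⟨phi (p*q) q r * s, (hsmul r s).symm,
        by rw [eproj_phi_mul, hs, mul_zero]⟩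
    · rw [Submodule.disjoint_def]
      rintro x hxM ⟨s, hsx, hs0⟩
      obtain ⟨r, hr⟩ := Submodule.mem_span_singleton.mp hxM
      rw [hsmul] at hr
      have hms : Ideal.Quotient.mk (Ideal.span {zpol (p*q)})
          (s - phi (p*q) q r * (xv*yv)) = 0 := by
        rw [map_sub, hsx, hr, sub_self]
      obtain ⟨t, hst⟩ := (hzero _).mp hms
      obtain ⟨g, hg⟩ := eproj_z p q t
      have h2 : eproj (p*q) q s - eproj (p*q) q (phi (p*q) q r * (xv*yv))
          = eproj (p*q) q (zpol (p*q) * t) := by rw [← map_sub, hst]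
      rw [hs0, eproj_phi_mul, eproj_xy] at h2
      have h3 : phi (p*q) q r * (xv*yv)
          = zpol (p*q) * (-((xv^(p*q) - yv^(p*q)) * phi (p*q) q g)) := by
        linear_combination -h2 - hg - (phi (p*q) q g) * hxyz
      rw [← hr, h3]
      exact (hzero _).mpr ⟨_, rfl⟩
    · rw [codisjoint_iff]
      rw [Submodule.eq_top_iff']
      intro x
      obtain ⟨s, rfl⟩ := Ideal.Quotient.mk_surjective x
      obtain ⟨g, hg⟩ := eproj_mem p q hq s
      refine Submodule.mem_sup.mpr
        ⟨Ideal.Quotient.mk _ (eproj (p*q) q s), ?_,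
         Ideal.Quotient.mk _ (s - eproj (p*q) q s), ?_, ?_⟩
      · apply Submodule.mem_span_singleton.mpr
        exact ⟨g, by rw [hsmul, mul_comm (phi (p*q) q g) (xv*yv), hg]⟩
      · exact ⟨s - eproj (p*q) q s, rfl, by rw [map_sub, eproj_idem, sub_self]⟩
      · rw [← map_add]
        congr 1
        ring
end
end

section
/- For all integers p ≥ 1, q ≥ 2 with m = pq, and all integers j, i, r with 0 ≤ j ≤ p−1 and 0 ≤ i, r ≤ q−2, such that i < r if j = 0 and such that it is not the case that both 2j = p and i = r, the R-submodule of S/(z) generated by the residue classes of the four monomials x^{jq+r+1}y^{i+1}, x^{i+1}y^{jq+r+1}, x^{r+1}y^{m−jq+i+1}, x^{m−jq+i+1}y^{r+1} is isomorphic, as an R-module, to the direct sum of two copies of Coker([[Y, 2X^{p−j}],[2X^{j}, Y]]). -/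
open MvPolynomial

noncomputable section

/- ## auxiliary -/

def sf (α β : ℕ) : Bool →₀ ℕ := Finsupp.single false α + Finsupp.single true β

lemma sf_apply_false (α β : ℕ) : sf α β false = α := by simp [sf]
lemma sf_apply_true (α β : ℕ) : sf α β true = β := by simp [sf]

lemma sf_eq_iff {a b c d : ℕ} : sf a b = sf c d ↔ a = c ∧ b = d := by
  constructor
  · intro h
    constructor
    · have := DFunLike.congr_fun h false
      simpa [sf_apply_false] using this
    · have := DFunLike.congr_fun h true
      simpa [sf_apply_true] using this
  · rintro ⟨rfl, rfl⟩; rfl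

lemma sf_add (a b c d : ℕ) : sf a b + sf c d = sf (a + c) (b + d) := by
  simp only [sf, Finsupp.single_add]
  abel

lemma sf_eta (v : Bool →₀ ℕ) : sf (v false) (v true) = v := by
  ext b
  cases b <;> simp [sf, Finsupp.single_apply]

lemma xy_pow (α β : ℕ) : xv ^ α * yv ^ β = monomial (sf α β) (1 : ℂ) := by
  rw [xv, yv, X_pow_eq_monomial, X_pow_eq_monomial, monomial_mul, one_mul]
  rfl

/-- the class functional -/
def Lam (m N k : ℕ) : Spoly →+ ℂ where
  toFun F := ∑ b ∈ Finset.range (N + 1),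
    if b % m = k % m then F.coeff (sf (N - b) b) else 0
  map_zero' := by simp
  map_add' F G := by
    simp only [coeff_add]
    rw [← Finset.sum_add_distrib]
    refine Finset.sum_congr rfl fun b _ => ?_
    split_ifs <;> simp

lemma Lam_monomial (m N k α β : ℕ) (c : ℂ) :
    Lam m N k (monomial (sf α β) c)
      = if α + β = N ∧ β % m = k % m then c else 0 := by
  show (∑ b ∈ Finset.range (N + 1),
      if b % m = k % m then (monomial (sf α β) c).coeff (sf (N - b) b) else 0) = _
  have step : ∀ b ∈ Finset.range (N + 1),
      (if b % m = k % m then (monomial (sf α β) c).coeff (sf (N - b) b) else 0)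
        = if b = β then (if α + β = N ∧ β % m = k % m then c else 0) else 0 := by
    intro b hb
    have hbN : b ≤ N := by simpa [Nat.lt_succ_iff] using hb
    rw [coeff_monomial]
    by_cases h1 : b = β
    · subst h1
      by_cases h2 : α + b = N
      · have : sf α b = sf (N - b) b := by rw [sf_eq_iff]; omega
        by_cases h3 : b % m = k % m <;> simp [h2, h3, this]
      · have : ¬ (sf α b = sf (N - b) b) := by
          rw [sf_eq_iff]; omega
        simp [h2, this]
    · have : ¬ (sf α β = sf (N - b) b) := by
        rw [sf_eq_iff]; omega
      simp [h1, this]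
  rw [Finset.sum_congr rfl step, Finset.sum_ite_eq' (Finset.range (N + 1)) β]
  by_cases hQ : α + β = N ∧ β % m = k % m
  · have : β ∈ Finset.range (N + 1) := by
      rw [Finset.mem_range]; omega
    simp [this]
  · simp [hQ]

lemma zpol_eq (m : ℕ) :
    zpol m = monomial (sf (m + 1) 1) (1 : ℂ) - monomial (sf 1 (m + 1)) 1 := by
  rw [← xy_pow, ← xy_pow]
  unfold zpol
  ring

lemma Lam_z_mul (m N k : ℕ) (h : Spoly) : Lam m N k (zpol m * h) = 0 := by
  conv_lhs => rw [← support_sum_monomial_coeff h]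
  rw [Finset.mul_sum, map_sum]
  refine Finset.sum_eq_zero fun v _ => ?_
  have hv : zpol m * monomial v (h.coeff v)
      = monomial (sf ((m + 1) + v false) (1 + v true)) (h.coeff v)
        - monomial (sf (1 + v false) ((m + 1) + v true)) (h.coeff v) := by
    rw [zpol_eq, sub_mul, monomial_mul, monomial_mul]
    conv_lhs => rw [← sf_eta v, sf_add, sf_add]
    rw [sf_eta, one_mul]
  rw [hv, map_sub, Lam_monomial, Lam_monomial]
  have e1 : ((m + 1) + v false) + (1 + v true) = N ↔ (1 + v false) + ((m + 1) + v true) = N := by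
    omega
  have e2 : (1 + v true) % m = ((m + 1) + v true) % m := by
    rw [show (m + 1) + v true = (1 + v true) + m by omega, Nat.add_mod_right]
  have : (((m + 1) + v false) + (1 + v true) = N ∧ (1 + v true) % m = k % m)
      ↔ ((1 + v false) + ((m + 1) + v true) = N ∧ ((m + 1) + v true) % m = k % m) := by
    rw [e1, e2]
  rw [if_congr this rfl rfl, sub_self]

/- ## series -/

def ser (q : ℕ) (u : Polynomial ℂ) (α β : ℕ) : Spoly :=
  Polynomial.aeval ((xv * yv) ^ q) u * monomial (sf α β) 1

lemma ser_eq_sum (q : ℕ) (u : Polynomial ℂ) (α β : ℕ) :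
    ser q u α β = ∑ n ∈ Finset.range (u.natDegree + 1),
      monomial (sf (n * q + α) (n * q + β)) (u.coeff n) := by
  rw [ser, Polynomial.aeval_eq_sum_range, Finset.sum_mul]
  refine Finset.sum_congr rfl fun n _ => ?_
  have h1 : ((xv * yv) ^ q) ^ n = xv ^ (n * q) * yv ^ (n * q) := by
    rw [← pow_mul, mul_pow, mul_comm q n]
  rw [h1, xy_pow, smul_mul_assoc, monomial_mul, sf_add, one_mul]
  rw [smul_monomial, smul_eq_mul, mul_one]

lemma Lam_ser (m N k q : ℕ) (u : Polynomial ℂ) (α β : ℕ) :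
    Lam m N k (ser q u α β) = ∑ n ∈ Finset.range (u.natDegree + 1),
      if (n * q + α) + (n * q + β) = N ∧ (n * q + β) % m = k % m then u.coeff n else 0 := by
  rw [ser_eq_sum, map_sum]
  exact Finset.sum_congr rfl fun n _ => Lam_monomial _ _ _ _ _ _

/- ## integer helpers -/

lemma intF {P T : ℤ} (hP : 0 < P) (h : P ∣ T) (h1 : |T| < P) : T = 0 :=
  Int.eq_zero_of_abs_lt_dvd h h1

lemma intG {P T : ℤ} (hP : 0 < P) (h : P ∣ T) (h2 : |2 * T| ≤ P) : T = 0 := by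
  obtain ⟨s, rfl⟩ := h
  rcases eq_or_ne s 0 with rfl | hs
  · ring
  · exfalso
    have h1 : (1 : ℤ) ≤ |s| := Int.one_le_abs hs
    have : |2 * (P * s)| = 2 * P * |s| := by
      rw [abs_mul, abs_mul]
      rw [abs_of_pos hP, abs_of_nonneg (by norm_num : (0:ℤ) ≤ 2)]
      ring
    nlinarith

lemma divq {q c T B : ℤ} (hq : 0 < q) (h : q * c ∣ q * T + B) (hB : |B| < q) :
    B = 0 ∧ c ∣ T := by
  have hq' : q ≠ 0 := ne_of_gt hq
  have h1 : q ∣ q * T + B := dvd_trans ⟨c, rfl⟩ h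
  have hqB : q ∣ B := (dvd_add_right (Dvd.intro T rfl)).mp h1
  have hB0 : B = 0 := intF hq hqB hB
  refine ⟨hB0, ?_⟩
  rw [hB0, add_zero] at h
  exact (mul_dvd_mul_iff_left hq').mp h

section Core

variable (q d j i r : ℕ)

lemma core (hq : 2 ≤ q) (hd : 1 ≤ d) (hi : i ≤ q - 2) (hr : r ≤ q - 2)
    (hj0 : j = 0 → i < r) (hmid : ¬(j = d ∧ i = r))
    (u₀ u₁ u₂ u₃ : Polynomial ℂ)
    (hP : zpol ((j + d) * q) ∣
      (ser q u₀ (j * q + r + 1) (i + 1) - ser q u₁ (r + 1) (d * q + i + 1)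
        + ser q u₂ (i + 1) (j * q + r + 1) - ser q u₃ (d * q + i + 1) (r + 1))) :
    u₀ = 0 ∧ u₁ = 0 := by
  obtain ⟨h, hPe⟩ := hP
  have hq0 : (0 : ℤ) < (q : ℤ) := by exact_mod_cast (by omega : 0 < q)
  have hq0' : (q : ℤ) ≠ 0 := ne_of_gt hq0
  have hjd : (0 : ℤ) < (j : ℤ) + d := by
    have : 1 ≤ d := hd
    omega
  have hjd' : ((j : ℤ) + d) ≠ 0 := ne_of_gt hjd
  have absB : |(i : ℤ) - r| < q := by
    rw [abs_lt]; constructor <;> omega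
  have e2 : (((j + d) * q : ℕ) : ℤ) = (q : ℤ) * ((j : ℤ) + d) := by push_cast; ring
  constructor
  -- u₀ = 0
  · ext n₀
    simp only [Polynomial.coeff_zero]
    have h0 : Lam ((j + d) * q) ((n₀ * q + (j * q + r + 1)) + (n₀ * q + (i + 1)))
        (n₀ * q + (i + 1))
        (ser q u₀ (j * q + r + 1) (i + 1) - ser q u₁ (r + 1) (d * q + i + 1)
          + ser q u₂ (i + 1) (j * q + r + 1) - ser q u₃ (d * q + i + 1) (r + 1)) = 0 := by
      rw [hPe]; exact Lam_z_mul _ _ _ _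
    simp only [map_sub, map_add, Lam_ser] at h0
    have s1 : (∑ n ∈ Finset.range (u₀.natDegree + 1),
        if (n * q + (j * q + r + 1)) + (n * q + (i + 1))
            = (n₀ * q + (j * q + r + 1)) + (n₀ * q + (i + 1))
          ∧ (n * q + (i + 1)) % ((j + d) * q) = (n₀ * q + (i + 1)) % ((j + d) * q)
          then u₀.coeff n else 0) = u₀.coeff n₀ := by
      have congr1 : ∀ n ∈ Finset.range (u₀.natDegree + 1),
          (if (n * q + (j * q + r + 1)) + (n * q + (i + 1))
              = (n₀ * q + (j * q + r + 1)) + (n₀ * q + (i + 1))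
            ∧ (n * q + (i + 1)) % ((j + d) * q) = (n₀ * q + (i + 1)) % ((j + d) * q)
            then u₀.coeff n else 0) = if n = n₀ then u₀.coeff n else 0 := by
        intro n _
        refine if_congr ⟨?_, ?_⟩ rfl rfl
        · rintro ⟨hdeg, -⟩
          have hz : (q : ℤ) * (2 * n) = (q : ℤ) * (2 * n₀) := by
            zify at hdeg; linear_combination hdeg
          have := mul_left_cancel₀ hq0' hz
          omega
        · rintro rfl; exact ⟨rfl, rfl⟩
      rw [Finset.sum_congr rfl congr1, Finset.sum_ite_eq' _ n₀]
      split_ifs with hmem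
      · rfl
      · refine (Polynomial.coeff_eq_zero_of_natDegree_lt ?_).symm
        simp only [Finset.mem_range] at hmem; omega
    have s2 : (∑ n ∈ Finset.range (u₁.natDegree + 1),
        if (n * q + (r + 1)) + (n * q + (d * q + i + 1))
            = (n₀ * q + (j * q + r + 1)) + (n₀ * q + (i + 1))
          ∧ (n * q + (d * q + i + 1)) % ((j + d) * q) = (n₀ * q + (i + 1)) % ((j + d) * q)
          then u₁.coeff n else 0) = 0 := by
      refine Finset.sum_eq_zero fun n _ => if_neg ?_
      rintro ⟨hdeg, hmod⟩
      have hdz : (q : ℤ) * ((d : ℤ) + 2 * n) = (q : ℤ) * ((j : ℤ) + 2 * n₀) := by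
        zify at hdeg; linear_combination hdeg
      have hnn : (d : ℤ) + 2 * n = (j : ℤ) + 2 * n₀ := mul_left_cancel₀ hq0' hdz
      have hdvd0 := Nat.ModEq.dvd (show Nat.ModEq ((j + d) * q)
        (n * q + (d * q + i + 1)) (n₀ * q + (i + 1)) from hmod)
      have hdvd : (q : ℤ) * ((j : ℤ) + d) ∣ (q : ℤ) * ((n₀ : ℤ) - n - d) + 0 := by
        rw [e2] at hdvd0
        have e : ((n₀ * q + (i + 1) : ℕ) : ℤ) - ((n * q + (d * q + i + 1) : ℕ) : ℤ)
            = (q : ℤ) * ((n₀ : ℤ) - n - d) + 0 := by push_cast; ring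
        rw [e] at hdvd0; exact hdvd0
      obtain ⟨-, hT⟩ := divq hq0 hdvd (by simpa using hq0)
      obtain ⟨s, hs⟩ := hT
      have hfin : ((j : ℤ) + d) * (2 * s) = ((j : ℤ) + d) * (-1) := by
        linear_combination (-2 : ℤ) * hs - hnn
      have := mul_left_cancel₀ hjd' hfin
      omega
    have s3 : (∑ n ∈ Finset.range (u₂.natDegree + 1),
        if (n * q + (i + 1)) + (n * q + (j * q + r + 1))
            = (n₀ * q + (j * q + r + 1)) + (n₀ * q + (i + 1))
          ∧ (n * q + (j * q + r + 1)) % ((j + d) * q) = (n₀ * q + (i + 1)) % ((j + d) * q)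
          then u₂.coeff n else 0) = 0 := by
      refine Finset.sum_eq_zero fun n _ => if_neg ?_
      rintro ⟨hdeg, hmod⟩
      have hdz : (q : ℤ) * (2 * n) = (q : ℤ) * (2 * n₀) := by
        zify at hdeg; linear_combination hdeg
      have hnn : n = n₀ := by have := mul_left_cancel₀ hq0' hdz; omega
      subst hnn
      have hdvd0 := Nat.ModEq.dvd (show Nat.ModEq ((j + d) * q)
        (n * q + (j * q + r + 1)) (n * q + (i + 1)) from hmod)
      have hdvd : (q : ℤ) * ((j : ℤ) + d) ∣ (q : ℤ) * (-(j : ℤ)) + ((i : ℤ) - r) := by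
        rw [e2] at hdvd0
        have e : ((n * q + (i + 1) : ℕ) : ℤ) - ((n * q + (j * q + r + 1) : ℕ) : ℤ)
            = (q : ℤ) * (-(j : ℤ)) + ((i : ℤ) - r) := by push_cast; ring
        rw [e] at hdvd0; exact hdvd0
      obtain ⟨hir, hT⟩ := divq hq0 hdvd absB
      have hj' : ((j : ℤ) + d) ∣ (j : ℤ) := (dvd_neg).mp hT
      have hj0' : (j : ℤ) = 0 := intF hjd hj' (by rw [abs_of_nonneg (by positivity)]; omega)
      have : i < r := hj0 (by omega)
      omega
    have s4 : (∑ n ∈ Finset.range (u₃.natDegree + 1),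
        if (n * q + (d * q + i + 1)) + (n * q + (r + 1))
            = (n₀ * q + (j * q + r + 1)) + (n₀ * q + (i + 1))
          ∧ (n * q + (r + 1)) % ((j + d) * q) = (n₀ * q + (i + 1)) % ((j + d) * q)
          then u₃.coeff n else 0) = 0 := by
      refine Finset.sum_eq_zero fun n _ => if_neg ?_
      rintro ⟨hdeg, hmod⟩
      have hdz : (q : ℤ) * ((d : ℤ) + 2 * n) = (q : ℤ) * ((j : ℤ) + 2 * n₀) := by
        zify at hdeg; linear_combination hdeg
      have hnn : (d : ℤ) + 2 * n = (j : ℤ) + 2 * n₀ := mul_left_cancel₀ hq0' hdz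
      have hdvd0 := Nat.ModEq.dvd (show Nat.ModEq ((j + d) * q)
        (n * q + (r + 1)) (n₀ * q + (i + 1)) from hmod)
      have hdvd : (q : ℤ) * ((j : ℤ) + d) ∣ (q : ℤ) * ((n₀ : ℤ) - n) + ((i : ℤ) - r) := by
        rw [e2] at hdvd0
        have e : ((n₀ * q + (i + 1) : ℕ) : ℤ) - ((n * q + (r + 1) : ℕ) : ℤ)
            = (q : ℤ) * ((n₀ : ℤ) - n) + ((i : ℤ) - r) := by push_cast; ring
        rw [e] at hdvd0; exact hdvd0
      obtain ⟨hir, hT⟩ := divq hq0 hdvd absB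
      have hT0 : ((n₀ : ℤ) - n) = 0 := by
        refine intG hjd hT ?_
        rw [show 2 * ((n₀ : ℤ) - n) = (d : ℤ) - j by linarith [hnn]]
        rw [abs_le]; constructor <;> omega
      exact hmid ⟨by omega, by omega⟩
    rw [s1, s2, s3, s4] at h0
    simpa using h0
  -- u₁ = 0
  · ext n₀
    simp only [Polynomial.coeff_zero]
    have h0 : Lam ((j + d) * q) ((n₀ * q + (r + 1)) + (n₀ * q + (d * q + i + 1)))
        (n₀ * q + (d * q + i + 1))
        (ser q u₀ (j * q + r + 1) (i + 1) - ser q u₁ (r + 1) (d * q + i + 1)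
          + ser q u₂ (i + 1) (j * q + r + 1) - ser q u₃ (d * q + i + 1) (r + 1)) = 0 := by
      rw [hPe]; exact Lam_z_mul _ _ _ _
    simp only [map_sub, map_add, Lam_ser] at h0
    have s1 : (∑ n ∈ Finset.range (u₀.natDegree + 1),
        if (n * q + (j * q + r + 1)) + (n * q + (i + 1))
            = (n₀ * q + (r + 1)) + (n₀ * q + (d * q + i + 1))
          ∧ (n * q + (i + 1)) % ((j + d) * q)
            = (n₀ * q + (d * q + i + 1)) % ((j + d) * q)
          then u₀.coeff n else 0) = 0 := by
      refine Finset.sum_eq_zero fun n _ => if_neg ?_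
      rintro ⟨hdeg, hmod⟩
      have hdz : (q : ℤ) * ((j : ℤ) + 2 * n) = (q : ℤ) * ((d : ℤ) + 2 * n₀) := by
        zify at hdeg; linear_combination hdeg
      have hnn : (j : ℤ) + 2 * n = (d : ℤ) + 2 * n₀ := mul_left_cancel₀ hq0' hdz
      have hdvd0 := Nat.ModEq.dvd (show Nat.ModEq ((j + d) * q)
        (n * q + (i + 1)) (n₀ * q + (d * q + i + 1)) from hmod)
      have hdvd : (q : ℤ) * ((j : ℤ) + d) ∣ (q : ℤ) * ((n₀ : ℤ) + d - n) + 0 := by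
        rw [e2] at hdvd0
        have e : ((n₀ * q + (d * q + i + 1) : ℕ) : ℤ) - ((n * q + (i + 1) : ℕ) : ℤ)
            = (q : ℤ) * ((n₀ : ℤ) + d - n) + 0 := by push_cast; ring
        rw [e] at hdvd0; exact hdvd0
      obtain ⟨-, hT⟩ := divq hq0 hdvd (by simpa using hq0)
      obtain ⟨s, hs⟩ := hT
      have hfin : ((j : ℤ) + d) * (2 * s) = ((j : ℤ) + d) * 1 := by
        linear_combination (-2 : ℤ) * hs - hnn
      have := mul_left_cancel₀ hjd' hfin
      omega
    have s2 : (∑ n ∈ Finset.range (u₁.natDegree + 1),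
        if (n * q + (r + 1)) + (n * q + (d * q + i + 1))
            = (n₀ * q + (r + 1)) + (n₀ * q + (d * q + i + 1))
          ∧ (n * q + (d * q + i + 1)) % ((j + d) * q)
            = (n₀ * q + (d * q + i + 1)) % ((j + d) * q)
          then u₁.coeff n else 0) = u₁.coeff n₀ := by
      have congr1 : ∀ n ∈ Finset.range (u₁.natDegree + 1),
          (if (n * q + (r + 1)) + (n * q + (d * q + i + 1))
              = (n₀ * q + (r + 1)) + (n₀ * q + (d * q + i + 1))
            ∧ (n * q + (d * q + i + 1)) % ((j + d) * q)
              = (n₀ * q + (d * q + i + 1)) % ((j + d) * q)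
            then u₁.coeff n else 0) = if n = n₀ then u₁.coeff n else 0 := by
        intro n _
        refine if_congr ⟨?_, ?_⟩ rfl rfl
        · rintro ⟨hdeg, -⟩
          have hz : (q : ℤ) * (2 * n) = (q : ℤ) * (2 * n₀) := by
            zify at hdeg; linear_combination hdeg
          have := mul_left_cancel₀ hq0' hz
          omega
        · rintro rfl; exact ⟨rfl, rfl⟩
      rw [Finset.sum_congr rfl congr1, Finset.sum_ite_eq' _ n₀]
      split_ifs with hmem
      · rfl
      · refine (Polynomial.coeff_eq_zero_of_natDegree_lt ?_).symm
        simp only [Finset.mem_range] at hmem; omega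
    have s3 : (∑ n ∈ Finset.range (u₂.natDegree + 1),
        if (n * q + (i + 1)) + (n * q + (j * q + r + 1))
            = (n₀ * q + (r + 1)) + (n₀ * q + (d * q + i + 1))
          ∧ (n * q + (j * q + r + 1)) % ((j + d) * q)
            = (n₀ * q + (d * q + i + 1)) % ((j + d) * q)
          then u₂.coeff n else 0) = 0 := by
      refine Finset.sum_eq_zero fun n _ => if_neg ?_
      rintro ⟨hdeg, hmod⟩
      have hdz : (q : ℤ) * ((j : ℤ) + 2 * n) = (q : ℤ) * ((d : ℤ) + 2 * n₀) := by
        zify at hdeg; linear_combination hdeg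
      have hnn : (j : ℤ) + 2 * n = (d : ℤ) + 2 * n₀ := mul_left_cancel₀ hq0' hdz
      have hdvd0 := Nat.ModEq.dvd (show Nat.ModEq ((j + d) * q)
        (n * q + (j * q + r + 1)) (n₀ * q + (d * q + i + 1)) from hmod)
      have hdvd : (q : ℤ) * ((j : ℤ) + d)
          ∣ (q : ℤ) * ((n₀ : ℤ) + d - n - j) + ((i : ℤ) - r) := by
        rw [e2] at hdvd0
        have e : ((n₀ * q + (d * q + i + 1) : ℕ) : ℤ) - ((n * q + (j * q + r + 1) : ℕ) : ℤ)
            = (q : ℤ) * ((n₀ : ℤ) + d - n - j) + ((i : ℤ) - r) := by push_cast; ring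
        rw [e] at hdvd0; exact hdvd0
      obtain ⟨hir, hT⟩ := divq hq0 hdvd absB
      have hT0 : ((n₀ : ℤ) + d - n - j) = 0 := by
        refine intG hjd hT ?_
        rw [show 2 * ((n₀ : ℤ) + d - n - j) = (d : ℤ) - j by linarith [hnn]]
        rw [abs_le]; constructor <;> omega
      exact hmid ⟨by omega, by omega⟩
    have s4 : (∑ n ∈ Finset.range (u₃.natDegree + 1),
        if (n * q + (d * q + i + 1)) + (n * q + (r + 1))
            = (n₀ * q + (r + 1)) + (n₀ * q + (d * q + i + 1))
          ∧ (n * q + (r + 1)) % ((j + d) * q)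
            = (n₀ * q + (d * q + i + 1)) % ((j + d) * q)
          then u₃.coeff n else 0) = 0 := by
      refine Finset.sum_eq_zero fun n _ => if_neg ?_
      rintro ⟨hdeg, hmod⟩
      have hdz : (q : ℤ) * (2 * n) = (q : ℤ) * (2 * n₀) := by
        zify at hdeg; linear_combination hdeg
      have hnn : n = n₀ := by have := mul_left_cancel₀ hq0' hdz; omega
      subst hnn
      have hdvd0 := Nat.ModEq.dvd (show Nat.ModEq ((j + d) * q)
        (n * q + (r + 1)) (n * q + (d * q + i + 1)) from hmod)
      have hdvd : (q : ℤ) * ((j : ℤ) + d) ∣ (q : ℤ) * (d : ℤ) + ((i : ℤ) - r) := by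
        rw [e2] at hdvd0
        have e : ((n * q + (d * q + i + 1) : ℕ) : ℤ) - ((n * q + (r + 1) : ℕ) : ℤ)
            = (q : ℤ) * (d : ℤ) + ((i : ℤ) - r) := by push_cast; ring
        rw [e] at hdvd0; exact hdvd0
      obtain ⟨hir, hT⟩ := divq hq0 hdvd absB
      rcases Nat.eq_zero_or_pos j with hj | hj
      · have : i < r := hj0 hj
        omega
      · have hd0 : (d : ℤ) = 0 := by
          refine intF hjd hT ?_
          rw [abs_of_nonneg (by positivity)]; omega
        omega
    rw [s1, s2, s3, s4] at h0
    simpa using h0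

end Core

/- ## swap symmetry -/

lemma swap_monomial (α β : ℕ) (c : ℂ) :
    rename Bool.not (monomial (sf α β) c) = monomial (sf β α) c := by
  rw [rename_monomial]
  congr 1
  rw [sf, sf, Finsupp.mapDomain_add, Finsupp.mapDomain_single, Finsupp.mapDomain_single]
  simp [add_comm]

lemma swap_ser (q : ℕ) (u : Polynomial ℂ) (α β : ℕ) :
    rename Bool.not (ser q u α β) = ser q u β α := by
  rw [ser, ser, map_mul, swap_monomial]
  congr 1
  rw [← Polynomial.aeval_algHom_apply]
  congr 1
  rw [map_pow, map_mul, xv, yv, rename_X, rename_X]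
  simp [xv, yv, mul_comm]

lemma swap_zpol (m : ℕ) : rename Bool.not (zpol m) = -zpol m := by
  simp only [zpol, map_mul, map_sub, map_pow, xv, yv, rename_X, Bool.not_false, Bool.not_true]
  ring

lemma core4 (q d j i r : ℕ) (hq : 2 ≤ q) (hd : 1 ≤ d) (hi : i ≤ q - 2) (hr : r ≤ q - 2)
    (hj0 : j = 0 → i < r) (hmid : ¬(j = d ∧ i = r))
    (u₀ u₁ u₂ u₃ : Polynomial ℂ)
    (hP : zpol ((j + d) * q) ∣
      (ser q u₀ (j * q + r + 1) (i + 1) - ser q u₁ (r + 1) (d * q + i + 1)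
        + ser q u₂ (i + 1) (j * q + r + 1) - ser q u₃ (d * q + i + 1) (r + 1))) :
    u₀ = 0 ∧ u₁ = 0 ∧ u₂ = 0 ∧ u₃ = 0 := by
  obtain ⟨h01a, h01b⟩ := core q d j i r hq hd hi hr hj0 hmid u₀ u₁ u₂ u₃ hP
  have hP2 : zpol ((j + d) * q) ∣
      (ser q u₂ (j * q + r + 1) (i + 1) - ser q u₃ (r + 1) (d * q + i + 1)
        + ser q u₀ (i + 1) (j * q + r + 1) - ser q u₁ (d * q + i + 1) (r + 1)) := by
    obtain ⟨h, hPe⟩ := hP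
    have := congrArg (rename Bool.not) hPe
    rw [map_sub, map_add, map_sub, map_mul, swap_ser, swap_ser, swap_ser, swap_ser,
      swap_zpol] at this
    refine ⟨-(rename Bool.not h), ?_⟩
    rw [show -zpol ((j+d)*q) * rename Bool.not h = zpol ((j+d)*q) * -(rename Bool.not h) by ring]
      at this
    rw [← this]
    ring
  obtain ⟨h23a, h23b⟩ := core q d j i r hq hd hi hr hj0 hmid u₂ u₃ u₀ u₁ hP2
  exact ⟨h01a, h01b, h23a, h23b⟩

/- ## reduction mod the matrix image -/

def Amat (d j : ℕ) : Matrix (Fin 2) (Fin 2) Rpoly := !![Yv, 2 * Xv ^ d; 2 * Xv ^ j, Yv]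

lemma Amat_mulVec (d j : ℕ) (v : Fin 2 → Rpoly) :
    (Amat d j).mulVec v = ![Yv * v 0 + 2 * Xv ^ d * v 1, 2 * Xv ^ j * v 0 + Yv * v 1] := by
  funext t
  fin_cases t <;>
    simp [Amat, Matrix.mulVec, dotProduct, Fin.sum_univ_two, mul_assoc]

def iv (u : Fin 2 → Polynomial ℂ) : Fin 2 → Rpoly := fun t => Polynomial.aeval Xv (u t)

lemma step0 (d j : ℕ) (idx : Fin 2) (g : Fin 2 → Polynomial ℂ) :
    ∃ g' : Fin 2 → Polynomial ℂ,
      (X idx : Rpoly) • iv g - iv g' ∈ LinearMap.range (Amat d j).mulVecLin := by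
  fin_cases idx
  · refine ⟨fun t => Polynomial.X * g t, ?_⟩
    show (X (0 : Fin 2) : Rpoly) • iv g - iv (fun t => Polynomial.X * g t)
      ∈ LinearMap.range (Amat d j).mulVecLin
    have : (X 0 : Rpoly) • iv g - iv (fun t => Polynomial.X * g t) = 0 := by
      funext t
      simp [iv, Pi.smul_apply, smul_eq_mul, map_mul, Polynomial.aeval_X, Xv]
    rw [this]; exact zero_mem _
  · refine ⟨![-(2 * Polynomial.X ^ d * g 1), -(2 * Polynomial.X ^ j * g 0)], ?_⟩
    show (X (1 : Fin 2) : Rpoly) • iv g - _ ∈ LinearMap.range (Amat d j).mulVecLin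
    refine ⟨iv g, ?_⟩
    rw [Matrix.mulVecLin_apply, Amat_mulVec]
    funext t
    fin_cases t <;>
      simp [iv, Pi.smul_apply, smul_eq_mul, map_mul, map_pow, map_neg, map_ofNat,
        Polynomial.aeval_X, Xv, Yv] <;> ring

lemma step1 (d j : ℕ) (w : Rpoly) : ∀ g : Fin 2 → Polynomial ℂ,
    ∃ u : Fin 2 → Polynomial ℂ,
      w • iv g - iv u ∈ LinearMap.range (Amat d j).mulVecLin := by
  induction w using MvPolynomial.induction_on with
  | C a =>
    intro g
    refine ⟨fun t => Polynomial.C a • g t, ?_⟩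
    have : (C a : Rpoly) • iv g - iv (fun t => Polynomial.C a • g t) = 0 := by
      funext t
      simp [iv, Pi.smul_apply, smul_eq_mul, map_smul, Polynomial.aeval_C,
        smul_eq_C_mul, algebraMap_eq]
    rw [this]; exact zero_mem _
  | add w₁ w₂ ih₁ ih₂ =>
    intro g
    obtain ⟨u₁, hu₁⟩ := ih₁ g
    obtain ⟨u₂, hu₂⟩ := ih₂ g
    refine ⟨u₁ + u₂, ?_⟩
    have : (w₁ + w₂) • iv g - iv (u₁ + u₂)
        = (w₁ • iv g - iv u₁) + (w₂ • iv g - iv u₂) := by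
      funext t
      simp [iv, Pi.smul_apply, add_smul, map_add]
      ring
    rw [this]; exact add_mem hu₁ hu₂
  | mul_X w idx ih =>
    intro g
    obtain ⟨u₁, hu₁⟩ := ih g
    obtain ⟨u₂, hu₂⟩ := step0 d j idx u₁
    refine ⟨u₂, ?_⟩
    have key : (w * X idx) • iv g - iv u₂
        = (X idx : Rpoly) • (w • iv g - iv u₁) + ((X idx : Rpoly) • iv u₁ - iv u₂) := by
      funext t
      simp [Pi.smul_apply, smul_eq_mul]
      ring
    rw [key]
    exact add_mem (Submodule.smul_mem _ _ hu₁) hu₂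

lemma red (d j : ℕ) (v : Fin 2 → Rpoly) :
    ∃ u : Fin 2 → Polynomial ℂ,
      v - iv u ∈ LinearMap.range (Amat d j).mulVecLin := by
  obtain ⟨u₁, hu₁⟩ := step1 d j (v 0) ![1, 0]
  obtain ⟨u₂, hu₂⟩ := step1 d j (v 1) ![0, 1]
  refine ⟨u₁ + u₂, ?_⟩
  have hiv1 : iv ![1, 0] = ![(1 : Rpoly), 0] := by
    funext t; fin_cases t <;> simp [iv]
  have hiv2 : iv ![0, 1] = ![(0 : Rpoly), 1] := by
    funext t; fin_cases t <;> simp [iv]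
  have : v - iv (u₁ + u₂)
      = (v 0 • iv ![1, 0] - iv u₁) + (v 1 • iv ![0, 1] - iv u₂) := by
    rw [hiv1, hiv2]
    funext t
    fin_cases t <;>
      simp [iv, Pi.smul_apply, smul_eq_mul, map_add, Matrix.vecHead, Matrix.vecTail] <;> ring
  rw [this]
  exact add_mem hu₁ hu₂

/- ## phi lemmas -/

lemma phi_X (m q : ℕ) : phi m q Xv = (xv * yv) ^ q := by
  simp [phi, Xv]

lemma phi_Y (m q : ℕ) : phi m q Yv = xv ^ m + yv ^ m := by
  simp [phi, Yv]

lemma aevalX (m q : ℕ) :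
    (aeval ![(xv * yv) ^ q, xv ^ m + yv ^ m] : Rpoly →ₐ[ℂ] Spoly) Xv = (xv * yv) ^ q := by
  simp [Xv]

lemma phi_aeval (m q : ℕ) (u : Polynomial ℂ) :
    phi m q (Polynomial.aeval Xv u) = Polynomial.aeval ((xv * yv) ^ q) u := by
  have h : phi m q (Polynomial.aeval Xv u)
      = (aeval ![(xv * yv) ^ q, xv ^ m + yv ^ m] : Rpoly →ₐ[ℂ] Spoly)
          (Polynomial.aeval Xv u) := rfl
  rw [h, ← Polynomial.aeval_algHom_apply, aevalX]

lemma phi_two_pow (m q e : ℕ) : phi m q (2 * Xv ^ e) = 2 * ((xv * yv) ^ q) ^ e := by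
  rw [map_mul, map_pow, phi_X, map_ofNat]

/- ## the main assembly -/

set_option maxHeartbeats 2000000 in
set_option synthInstance.maxHeartbeats 1000000 in
theorem final' (q d j i r : ℕ) (hq : 2 ≤ q) (hd : 1 ≤ d)
    (hi : i ≤ q - 2) (hr : r ≤ q - 2) (hj0 : j = 0 → i < r) (hmid2 : ¬(j = d ∧ i = r)) :
    letI : Module Rpoly (Spoly ⧸ Ideal.span {zpol ((j + d) * q)}) :=
      ((Ideal.Quotient.mk (Ideal.span {zpol ((j + d) * q)})).comp (phi ((j + d) * q) q)).toModule
    let M : Submodule Rpoly (Spoly ⧸ Ideal.span {zpol ((j + d) * q)}) :=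
      Submodule.span Rpoly
        {Ideal.Quotient.mk (Ideal.span {zpol ((j + d) * q)}) (xv ^ (j * q + r + 1) * yv ^ (i + 1)),
         Ideal.Quotient.mk (Ideal.span {zpol ((j + d) * q)}) (xv ^ (i + 1) * yv ^ (j * q + r + 1)),
         Ideal.Quotient.mk (Ideal.span {zpol ((j + d) * q)})
           (xv ^ (r + 1) * yv ^ (d * q + i + 1)),
         Ideal.Quotient.mk (Ideal.span {zpol ((j + d) * q)})
           (xv ^ (d * q + i + 1) * yv ^ (r + 1))}
    Nonempty (M ≃ₗ[Rpoly]
      (coker !![Yv, 2 * Xv ^ d; 2 * Xv ^ j, Yv]) ×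
      (coker !![Yv, 2 * Xv ^ d; 2 * Xv ^ j, Yv])) := by
  set I : Ideal Spoly := Ideal.span {zpol ((j + d) * q)} with hI
  set pi : Spoly →+* Spoly ⧸ I := Ideal.Quotient.mk I with hpi
  letI inst : Module Rpoly (Spoly ⧸ I) := (pi.comp (phi ((j + d) * q) q)).toModule
  set G1 := pi (xv ^ (j * q + r + 1) * yv ^ (i + 1)) with hG1
  set G2 := pi (xv ^ (r + 1) * yv ^ (d * q + i + 1)) with hG2
  set G3 := pi (xv ^ (i + 1) * yv ^ (j * q + r + 1)) with hG3
  set G4 := pi (xv ^ (d * q + i + 1) * yv ^ (r + 1)) with hG4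
  have hsmul : ∀ (w : Rpoly) (s : Spoly), w • (pi s) = pi (phi ((j + d) * q) q w * s) := by
    intro w s
    show pi (phi ((j + d) * q) q w) * pi s = _
    exact (map_mul pi _ _).symm
  -- the four relations
  have rel1 : Yv • G1 = (2 * Xv ^ j) • G2 := by
    rw [hG1, hG2, hsmul, hsmul]
    refine Ideal.Quotient.eq.mpr (Ideal.mem_span_singleton'.mpr ⟨xv ^ (j * q + r) * yv ^ i, ?_⟩)
    rw [phi_Y, phi_two_pow, zpol]
    ring
  have rel2 : Yv • G2 = (2 * Xv ^ d) • G1 := by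
    rw [hG1, hG2, hsmul, hsmul]
    refine Ideal.Quotient.eq.mpr (Ideal.mem_span_singleton'.mpr
      ⟨-(xv ^ r * yv ^ (d * q + i)), ?_⟩)
    rw [phi_Y, phi_two_pow, zpol]
    ring
  have rel3 : Yv • G3 = (2 * Xv ^ j) • G4 := by
    rw [hG3, hG4, hsmul, hsmul]
    refine Ideal.Quotient.eq.mpr (Ideal.mem_span_singleton'.mpr
      ⟨-(xv ^ i * yv ^ (j * q + r)), ?_⟩)
    rw [phi_Y, phi_two_pow, zpol]
    ring
  have rel4 : Yv • G4 = (2 * Xv ^ d) • G3 := by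
    rw [hG3, hG4, hsmul, hsmul]
    refine Ideal.Quotient.eq.mpr (Ideal.mem_span_singleton'.mpr
      ⟨xv ^ (d * q + i) * yv ^ r, ?_⟩)
    rw [phi_Y, phi_two_pow, zpol]
    ring
  -- the presentation map
  set θ : ((Fin 2 → Rpoly) × (Fin 2 → Rpoly)) →ₗ[Rpoly] (Spoly ⧸ I) :=
    (LinearMap.toSpanSingleton Rpoly _ G1 ∘ₗ LinearMap.proj 0 ∘ₗ LinearMap.fst Rpoly _ _)
      - (LinearMap.toSpanSingleton Rpoly _ G2 ∘ₗ LinearMap.proj 1 ∘ₗ LinearMap.fst Rpoly _ _)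
      + (LinearMap.toSpanSingleton Rpoly _ G3 ∘ₗ LinearMap.proj 0 ∘ₗ LinearMap.snd Rpoly _ _)
      - (LinearMap.toSpanSingleton Rpoly _ G4 ∘ₗ LinearMap.proj 1 ∘ₗ LinearMap.snd Rpoly _ _)
    with hθdef
  have hθ : ∀ (v w : Fin 2 → Rpoly),
      θ (v, w) = v 0 • G1 - v 1 • G2 + w 0 • G3 - w 1 • G4 := by
    intro v w
    simp only [hθdef, LinearMap.sub_apply, LinearMap.add_apply, LinearMap.comp_apply,
      LinearMap.fst_apply, LinearMap.snd_apply, LinearMap.proj_apply,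
      LinearMap.toSpanSingleton_apply]
  set K := LinearMap.range (Amat d j).mulVecLin with hK
  -- columns die
  have hθ1 : ∀ v' : Fin 2 → Rpoly, θ ((Amat d j).mulVec v', 0) = 0 := by
    intro v'
    rw [hθ, Amat_mulVec]
    simp only [Matrix.cons_val_zero, Matrix.cons_val_one, Matrix.head_cons,
      Pi.zero_apply, zero_smul, add_zero, sub_zero]
    have eA : (Yv * v' 0 + 2 * Xv ^ d * v' 1) • G1
        = v' 0 • ((2 * Xv ^ j) • G2) + v' 1 • ((2 * Xv ^ d) • G1) := by
      rw [add_smul, mul_comm Yv (v' 0), mul_smul (v' 0) Yv G1, rel1,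
        mul_comm (2 * Xv ^ d) (v' 1), mul_smul (v' 1) (2 * Xv ^ d) G1]
    have eB : (2 * Xv ^ j * v' 0 + Yv * v' 1) • G2
        = v' 0 • ((2 * Xv ^ j) • G2) + v' 1 • ((2 * Xv ^ d) • G1) := by
      rw [add_smul, mul_comm (2 * Xv ^ j) (v' 0), mul_smul (v' 0) (2 * Xv ^ j) G2,
        mul_comm Yv (v' 1), mul_smul (v' 1) Yv G2, rel2]
    rw [eA, eB, sub_self]
  have hθ2 : ∀ w' : Fin 2 → Rpoly, θ (0, (Amat d j).mulVec w') = 0 := by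
    intro w'
    rw [hθ, Amat_mulVec]
    simp only [Matrix.cons_val_zero, Matrix.cons_val_one, Matrix.head_cons,
      Pi.zero_apply, zero_smul, zero_sub, sub_zero, zero_add]
    have eA : (Yv * w' 0 + 2 * Xv ^ d * w' 1) • G3
        = w' 0 • ((2 * Xv ^ j) • G4) + w' 1 • ((2 * Xv ^ d) • G3) := by
      rw [add_smul, mul_comm Yv (w' 0), mul_smul (w' 0) Yv G3, rel3,
        mul_comm (2 * Xv ^ d) (w' 1), mul_smul (w' 1) (2 * Xv ^ d) G3]
    have eB : (2 * Xv ^ j * w' 0 + Yv * w' 1) • G4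
        = w' 0 • ((2 * Xv ^ j) • G4) + w' 1 • ((2 * Xv ^ d) • G3) := by
      rw [add_smul, mul_comm (2 * Xv ^ j) (w' 0), mul_smul (w' 0) (2 * Xv ^ j) G4,
        mul_comm Yv (w' 1), mul_smul (w' 1) Yv G4, rel4]
    rw [eA, eB]
    abel
  -- kernel = K × K
  have hker : LinearMap.ker θ = K.prod K := by
    apply le_antisymm
    · rintro ⟨v, w⟩ hvw
      rw [LinearMap.mem_ker] at hvw
      obtain ⟨uv, huv⟩ := red d j v
      obtain ⟨uw, huw⟩ := red d j w
      obtain ⟨v', hv'⟩ := huv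
      obtain ⟨w', hw'⟩ := huw
      rw [Matrix.mulVecLin_apply] at hv' hw'
      have hv : v = iv uv + (Amat d j).mulVec v' := by rw [hv']; abel
      have hw : w = iv uw + (Amat d j).mulVec w' := by rw [hw']; abel
      have hsplit : (v, w) = ((iv uv, iv uw) : (Fin 2 → Rpoly) × (Fin 2 → Rpoly))
          + (((Amat d j).mulVec v', 0) + (0, (Amat d j).mulVec w')) := by
        rw [Prod.ext_iff]
        constructor <;> simp [hv, hw]
      have hzero : θ (iv uv, iv uw) = 0 := by
        have := hvw
        rw [hsplit, map_add, map_add, hθ1, hθ2] at this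
        simpa using this
      have hbig : θ (iv uv, iv uw)
          = pi (ser q (uv 0) (j * q + r + 1) (i + 1) - ser q (uv 1) (r + 1) (d * q + i + 1)
            + ser q (uw 0) (i + 1) (j * q + r + 1) - ser q (uw 1) (d * q + i + 1) (r + 1)) := by
        rw [hθ, map_sub, map_add, map_sub]
        have c1 : iv uv 0 • G1 = pi (ser q (uv 0) (j * q + r + 1) (i + 1)) := by
          rw [hG1, iv, hsmul, phi_aeval, ser, xy_pow]
        have c2 : iv uv 1 • G2 = pi (ser q (uv 1) (r + 1) (d * q + i + 1)) := by
          rw [hG2, iv, hsmul, phi_aeval, ser, xy_pow]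
        have c3 : iv uw 0 • G3 = pi (ser q (uw 0) (i + 1) (j * q + r + 1)) := by
          rw [hG3, iv, hsmul, phi_aeval, ser, xy_pow]
        have c4 : iv uw 1 • G4 = pi (ser q (uw 1) (d * q + i + 1) (r + 1)) := by
          rw [hG4, iv, hsmul, phi_aeval, ser, xy_pow]
        rw [c1, c2, c3, c4]
      have hmem : (ser q (uv 0) (j * q + r + 1) (i + 1) - ser q (uv 1) (r + 1) (d * q + i + 1)
            + ser q (uw 0) (i + 1) (j * q + r + 1) - ser q (uw 1) (d * q + i + 1) (r + 1)) ∈ I := by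
        rw [← Ideal.Quotient.eq_zero_iff_mem, ← hbig]
        exact hzero
      rw [hI, Ideal.mem_span_singleton] at hmem
      obtain ⟨z0, z1, z2, z3⟩ := core4 q d j i r hq hd hi hr hj0 hmid2 _ _ _ _ hmem
      have hiv0 : iv uv = 0 := by
        funext t; fin_cases t <;> simp [iv, z0, z1]
      have hiw0 : iv uw = 0 := by
        funext t; fin_cases t <;> simp [iv, z2, z3]
      constructor
      · show v ∈ K
        rw [hv, hiv0, zero_add]
        exact ⟨v', Matrix.mulVecLin_apply _ _⟩
      · show w ∈ K
        rw [hw, hiw0, zero_add]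
        exact ⟨w', Matrix.mulVecLin_apply _ _⟩
    · rintro ⟨v, w⟩ ⟨hv, hw⟩
      obtain ⟨v', hv'⟩ := hv
      obtain ⟨w', hw'⟩ := hw
      rw [Matrix.mulVecLin_apply] at hv' hw'
      dsimp only at hv' hw'
      rw [LinearMap.mem_ker]
      have hsplit : ((v, w) : (Fin 2 → Rpoly) × (Fin 2 → Rpoly)) = (v, 0) + (0, w) := by
        rw [Prod.ext_iff]; constructor <;> simp
      rw [hsplit, map_add, ← hv', ← hw', hθ1, hθ2, add_zero]
  -- range = M
  have hrange : LinearMap.range θ = Submodule.span Rpoly {G1, G3, G2, G4} := by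
    apply le_antisymm
    · rintro x ⟨vw, rfl⟩
      obtain ⟨v, w⟩ := vw
      rw [hθ v w]
      have m1 : G1 ∈ Submodule.span Rpoly ({G1, G3, G2, G4} : Set (Spoly ⧸ I)) :=
        Submodule.subset_span (by simp)
      have m2 : G2 ∈ Submodule.span Rpoly ({G1, G3, G2, G4} : Set (Spoly ⧸ I)) :=
        Submodule.subset_span (by simp)
      have m3 : G3 ∈ Submodule.span Rpoly ({G1, G3, G2, G4} : Set (Spoly ⧸ I)) :=
        Submodule.subset_span (by simp)
      have m4 : G4 ∈ Submodule.span Rpoly ({G1, G3, G2, G4} : Set (Spoly ⧸ I)) :=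
        Submodule.subset_span (by simp)
      exact sub_mem (add_mem (sub_mem (Submodule.smul_mem _ _ m1) (Submodule.smul_mem _ _ m2))
        (Submodule.smul_mem _ _ m3)) (Submodule.smul_mem _ _ m4)
    · rw [Submodule.span_le]
      rintro x hx
      simp only [Set.mem_insert_iff, Set.mem_singleton_iff] at hx
      rcases hx with rfl | rfl | rfl | rfl
      · exact ⟨(![1, 0], 0), by rw [hθ]; simp⟩
      · exact ⟨(0, ![1, 0]), by rw [hθ]; simp⟩
      · exact ⟨(![0, -1], 0), by rw [hθ]; simp⟩
      · exact ⟨(0, ![0, -1]), by rw [hθ]; simp⟩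
  -- put the pieces together
  set f : ((Fin 2 → Rpoly) × (Fin 2 → Rpoly)) →ₗ[Rpoly]
      (((Fin 2 → Rpoly) ⧸ K) × ((Fin 2 → Rpoly) ⧸ K)) := (K.mkQ).prodMap (K.mkQ) with hf
  have hfker : LinearMap.ker f = K.prod K := by
    rw [hf, LinearMap.ker_prodMap, Submodule.ker_mkQ]
  have hfsurj : Function.Surjective f :=
    Function.Surjective.prodMap K.mkQ_surjective K.mkQ_surjective
  have E : (Submodule.span Rpoly ({G1, G3, G2, G4} : Set (Spoly ⧸ I)))
      ≃ₗ[Rpoly] (((Fin 2 → Rpoly) ⧸ K) × ((Fin 2 → Rpoly) ⧸ K)) :=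
    (LinearEquiv.ofEq _ _ hrange.symm) ≪≫ₗ
      (LinearMap.quotKerEquivRange θ).symm ≪≫ₗ
      (Submodule.quotEquivOfEq _ _ (hker.trans hfker.symm)) ≪≫ₗ
      (LinearMap.quotKerEquivOfSurjective f hfsurj)
  exact ⟨E⟩

theorem stmt5 (p q : ℕ) (hp : 1 ≤ p) (hq : 2 ≤ q) (j i r : ℕ)
    (hjp : j ≤ p - 1) (hi : i ≤ q - 2) (hr : r ≤ q - 2)
    (hj0 : j = 0 → i < r) (hmid : ¬(2 * j = p ∧ i = r)) :
    letI : Module Rpoly (Spoly ⧸ Ideal.span {zpol (p * q)}) :=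
      ((Ideal.Quotient.mk (Ideal.span {zpol (p * q)})).comp (phi (p * q) q)).toModule
    let M : Submodule Rpoly (Spoly ⧸ Ideal.span {zpol (p * q)}) :=
      Submodule.span Rpoly
        {Ideal.Quotient.mk (Ideal.span {zpol (p * q)}) (xv ^ (j * q + r + 1) * yv ^ (i + 1)),
         Ideal.Quotient.mk (Ideal.span {zpol (p * q)}) (xv ^ (i + 1) * yv ^ (j * q + r + 1)),
         Ideal.Quotient.mk (Ideal.span {zpol (p * q)})
           (xv ^ (r + 1) * yv ^ (p * q - j * q + i + 1)),
         Ideal.Quotient.mk (Ideal.span {zpol (p * q)})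
           (xv ^ (p * q - j * q + i + 1) * yv ^ (r + 1))}
    Nonempty (M ≃ₗ[Rpoly]
      (coker !![Yv, 2 * Xv ^ (p - j); 2 * Xv ^ j, Yv]) ×
      (coker !![Yv, 2 * Xv ^ (p - j); 2 * Xv ^ j, Yv])) := by
  obtain ⟨d, hd1, rfl⟩ : ∃ d, 1 ≤ d ∧ p = j + d := ⟨p - j, by omega, by omega⟩
  have e1 : (j + d) * q - j * q = d * q := by rw [add_mul]; omega
  have e2 : j + d - j = d := by omega
  have hmid2 : ¬(j = d ∧ i = r) := by
    rintro ⟨hjd, hir⟩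
    exact hmid ⟨by omega, hir⟩
  show Nonempty _
  rw [e1, e2]
  exact final' q d j i r hq hd1 hi hr hj0 hmid2
end
end

section
/- There is an isomorphism of R-modules Coker(ψ_0) ≅ R/(X) ⊕ R/(X(Y² − 4X^p)); that is, the cokernel of the matrix [[XY, −2X],[−2X^{p+1}, XY]] acting on R² is isomorphic to the direct sum of R/(X) and R/(Δ) (in the notation of the paper, N_0 ≅ A ⊕ R/(Δ)). -/
open MvPolynomial

noncomputable section

set_option maxHeartbeats 1000000 in
theorem stmt14 (p : ℕ) (hp : 1 ≤ p) :
    Nonempty (coker !![Xv * Yv, -2 * Xv; -2 * Xv ^ (p + 1), Xv * Yv] ≃ₗ[Rpoly]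
      (Rpoly ⧸ Ideal.span {Xv}) × (Rpoly ⧸ Ideal.span {Xv * (Yv ^ 2 - 4 * Xv ^ p)})) := by
  classical
  set h : Rpoly := C (2⁻¹ : ℂ) with hh
  have h2 : h * 2 = 1 := by
    rw [hh, show (2:Rpoly) = C (2:ℂ) from (map_ofNat C 2).symm, ← C_mul]; norm_num
  set I : Ideal Rpoly := Ideal.span {Xv} with hI
  set J : Ideal Rpoly := Ideal.span {Xv * (Yv ^ 2 - 4 * Xv ^ p)} with hJ
  let f : (Fin 2 → Rpoly) →ₗ[Rpoly] (Rpoly ⧸ I) × (Rpoly ⧸ J) :=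
    { toFun := fun v => (I.mkQ (v 0), J.mkQ (h * Yv * v 0 + v 1))
      map_add' := by
        intro v w
        have e : h * Yv * (v 0 + w 0) + (v 1 + w 1)
            = (h * Yv * v 0 + v 1) + (h * Yv * w 0 + w 1) := by ring
        simp only [Pi.add_apply, Prod.mk_add_mk, e, map_add]
      map_smul' := by
        intro c v
        have e : h * Yv * (c * v 0) + c * v 1 = c * (h * Yv * v 0 + v 1) := by ring
        simp only [Pi.smul_apply, smul_eq_mul, e, RingHom.id_apply, Prod.smul_mk,
          ← map_smul, smul_eq_mul] }
  have hfapp : ∀ v, f v = (I.mkQ (v 0), J.mkQ (h * Yv * v 0 + v 1)) := fun v => rfl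
  have hsurj : Function.Surjective f := by
    rintro ⟨x, y⟩
    obtain ⟨a, rfl⟩ := Submodule.mkQ_surjective I x
    obtain ⟨b, rfl⟩ := Submodule.mkQ_surjective J y
    refine ⟨![a, b - h * Yv * a], ?_⟩
    rw [hfapp]
    simp only [Matrix.cons_val_zero, Matrix.cons_val_one, Matrix.head_cons]
    rw [show h * Yv * a + (b - h * Yv * a) = b from by ring]
  have hker : LinearMap.range
      (Matrix.mulVecLin !![Xv * Yv, -2 * Xv; -2 * Xv ^ (p + 1), Xv * Yv])
      = LinearMap.ker f := by
    apply le_antisymm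
    · rintro _ ⟨w, rfl⟩
      rw [LinearMap.mem_ker, hfapp]
      have c0 : (!![Xv * Yv, -2 * Xv; -2 * Xv ^ (p + 1), Xv * Yv]).mulVecLin w 0
          = Xv * Yv * w 0 + (-2 * Xv) * w 1 := by
        simp [Matrix.mulVecLin_apply, Matrix.mulVec, dotProduct, Fin.sum_univ_two]
      have c1 : (!![Xv * Yv, -2 * Xv; -2 * Xv ^ (p + 1), Xv * Yv]).mulVecLin w 1
          = (-2 * Xv ^ (p + 1)) * w 0 + Xv * Yv * w 1 := by
        simp [Matrix.mulVecLin_apply, Matrix.mulVec, dotProduct, Fin.sum_univ_two]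
      rw [c0, c1, Prod.mk_eq_zero]
      constructor
      · rw [Submodule.mkQ_apply, Submodule.Quotient.mk_eq_zero, hI,
          Ideal.mem_span_singleton]
        exact ⟨Yv * w 0 + (-2) * w 1, by ring⟩
      · rw [Submodule.mkQ_apply, Submodule.Quotient.mk_eq_zero, hJ,
          Ideal.mem_span_singleton]
        refine ⟨h * w 0, ?_⟩
        linear_combination (2 * Xv ^ (p+1) * w 0 - Xv * Yv * w 1) * h2
    · intro v hv
      rw [LinearMap.mem_ker, hfapp, Prod.mk_eq_zero] at hv
      obtain ⟨hv0, hv1⟩ := hv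
      rw [Submodule.mkQ_apply, Submodule.Quotient.mk_eq_zero, hI,
        Ideal.mem_span_singleton] at hv0
      rw [Submodule.mkQ_apply, Submodule.Quotient.mk_eq_zero, hJ,
        Ideal.mem_span_singleton] at hv1
      obtain ⟨a, ha⟩ := hv0
      obtain ⟨b, hb⟩ := hv1
      refine ⟨![2 * b, -(h * a) + Yv * b], ?_⟩
      funext i
      fin_cases i
      · show (Matrix.mulVecLin _ _) 0 = v 0
        simp only [Matrix.mulVecLin_apply]
        simp [Matrix.mulVec, dotProduct, Fin.sum_univ_two]
        linear_combination -ha + Xv * a * h2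
      · show (Matrix.mulVecLin _ _) 1 = v 1
        simp only [Matrix.mulVecLin_apply]
        simp [Matrix.mulVec, dotProduct, Fin.sum_univ_two]
        linear_combination -hb + h * Yv * ha
  exact ⟨(Submodule.quotEquivOfEq _ _ hker).trans (f.quotKerEquivOfSurjective hsurj)⟩
end
end

section
/- Suppose p is even. Then the middle module Coker(φ_{p/2}) decomposes: there is an isomorphism of R-modules Coker([[Y, 2X^{p/2}],[2X^{p/2}, Y]]) ≅ R/(Y − 2X^{p/2}) ⊕ R/(Y + 2X^{p/2}), where the two summands are the Cohen–Macaulay modules arising from the 1×1 matrix factorizations (Y − 2X^{p/2})·(X(Y + 2X^{p/2})) = Δ and (Y + 2X^{p/2})·(X(Y − 2X^{p/2})) = Δ. -/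
open MvPolynomial

noncomputable section

/-- `v ↦ v 0 - v 1` as a linear map. -/
def subLM : (Fin 2 → Rpoly) →ₗ[Rpoly] Rpoly where
  toFun v := v 0 - v 1
  map_add' v w := by simp; ring
  map_smul' c v := by simp [smul_eq_mul]; ring

/-- `v ↦ v 0 + v 1` as a linear map. -/
def addLM : (Fin 2 → Rpoly) →ₗ[Rpoly] Rpoly where
  toFun v := v 0 + v 1
  map_add' v w := by simp; ring
  map_smul' c v := by simp [smul_eq_mul]; ring

set_option maxHeartbeats 1000000 in
theorem stmt16 (p : ℕ) (hp : 1 ≤ p) (hpe : Even p) :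
    (Yv - 2 * Xv ^ (p / 2)) * (Xv * (Yv + 2 * Xv ^ (p / 2))) = Xv * (Yv ^ 2 - 4 * Xv ^ p) ∧
    (Yv + 2 * Xv ^ (p / 2)) * (Xv * (Yv - 2 * Xv ^ (p / 2))) = Xv * (Yv ^ 2 - 4 * Xv ^ p) ∧
    Nonempty (coker !![Yv, 2 * Xv ^ (p / 2); 2 * Xv ^ (p / 2), Yv] ≃ₗ[Rpoly]
      (Rpoly ⧸ Ideal.span {Yv - 2 * Xv ^ (p / 2)}) ×
      (Rpoly ⧸ Ideal.span {Yv + 2 * Xv ^ (p / 2)})) := by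
  obtain ⟨k, hk⟩ := hpe
  have hk2 : p / 2 = k := by omega
  subst hk
  rw [hk2]
  refine ⟨by ring, by ring, ?_⟩
  set a : Rpoly := Xv ^ k with ha
  set u : Rpoly := Yv - 2 * a with hu
  set w : Rpoly := Yv + 2 * a with hw
  set M : Matrix (Fin 2) (Fin 2) Rpoly := !![Yv, 2 * a; 2 * a, Yv] with hM
  set half : Rpoly := algebraMap ℂ Rpoly (1/2 : ℂ) with hhalf
  have h2 : (2 : Rpoly) * half = 1 := by
    have h' : ((algebraMap ℂ Rpoly) 2) * half = 1 := by
      rw [hhalf, ← map_mul]; norm_num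
    rwa [map_ofNat] at h'
  set F : (Fin 2 → Rpoly) →ₗ[Rpoly]
      (Rpoly ⧸ Ideal.span {u}) × (Rpoly ⧸ Ideal.span {w}) :=
    LinearMap.prod
      ((Ideal.span {u}).mkQ ∘ₗ subLM)
      ((Ideal.span {w}).mkQ ∘ₗ addLM) with hF
  have hFapp : ∀ v : Fin 2 → Rpoly,
      F v = (Submodule.Quotient.mk (v 0 - v 1), Submodule.Quotient.mk (v 0 + v 1)) := by
    intro v; rfl
  have hmul : ∀ v : Fin 2 → Rpoly,
      M.mulVecLin v = ![Yv * v 0 + 2 * a * v 1, 2 * a * v 0 + Yv * v 1] := by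
    intro v
    funext i
    fin_cases i <;>
      simp [hM, Matrix.mulVecLin_apply, Matrix.mulVec, dotProduct,
        Fin.sum_univ_two, mul_comm]
  have hsurj : Function.Surjective F := by
    rintro ⟨x, y⟩
    obtain ⟨x, rfl⟩ := Ideal.Quotient.mk_surjective x
    obtain ⟨y, rfl⟩ := Ideal.Quotient.mk_surjective y
    refine ⟨![half * (x + y), half * (y - x)], ?_⟩
    rw [hFapp]
    have e1 : (![half * (x + y), half * (y - x)] : Fin 2 → Rpoly) 0 -
        ![half * (x + y), half * (y - x)] 1 = x := by
      simp only [Matrix.cons_val_zero, Matrix.cons_val_one, Matrix.head_cons]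
      linear_combination x * h2
    have e2 : (![half * (x + y), half * (y - x)] : Fin 2 → Rpoly) 0 +
        ![half * (x + y), half * (y - x)] 1 = y := by
      simp only [Matrix.cons_val_zero, Matrix.cons_val_one, Matrix.head_cons]
      linear_combination y * h2
    rw [e1, e2]
    rfl
  have hker : LinearMap.range M.mulVecLin = LinearMap.ker F := by
    apply le_antisymm
    · rintro _ ⟨v, rfl⟩
      rw [LinearMap.mem_ker, hFapp, hmul v, Prod.mk_eq_zero]
      simp only [Matrix.cons_val_zero, Matrix.cons_val_one, Matrix.head_cons,
        Submodule.Quotient.mk_eq_zero]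
      constructor
      · rw [Ideal.mem_span_singleton]
        exact ⟨v 0 - v 1, by rw [hu]; ring⟩
      · rw [Ideal.mem_span_singleton]
        exact ⟨v 0 + v 1, by rw [hw]; ring⟩
    · intro v hv
      rw [LinearMap.mem_ker, hFapp, Prod.mk_eq_zero,
        Submodule.Quotient.mk_eq_zero, Submodule.Quotient.mk_eq_zero,
        Ideal.mem_span_singleton, Ideal.mem_span_singleton] at hv
      obtain ⟨⟨f, hf⟩, ⟨g, hg⟩⟩ := hv
      refine ⟨![half * (f + g), half * (g - f)], ?_⟩
      rw [hmul]
      have hf' : u * f = v 0 - v 1 := hf.symm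
      have hg' : w * g = v 0 + v 1 := hg.symm
      rw [hu] at hf'; rw [hw] at hg'
      refine funext fun i => ?_
      fin_cases i
      · show Yv * (half * (f + g)) + 2 * a * (half * (g - f)) = v 0
        linear_combination half * hf' + half * hg' + (v 0) * h2
      · show 2 * a * (half * (f + g)) + Yv * (half * (g - f)) = v 1
        linear_combination (-half) * hf' + half * hg' + (v 1) * h2
  exact ⟨(Submodule.quotEquivOfEq _ _ hker).trans (F.quotKerEquivOfSurjective hsurj)⟩
end
end

section
/- Suppose p is even. Then the middle module Coker(ψ_{p/2}) decomposes: there is an isomorphism of R-modules Coker([[XY, −2X^{(p/2)+1}],[−2X^{(p/2)+1}, XY]]) ≅ R/(X(Y − 2X^{p/2})) ⊕ R/(X(Y + 2X^{p/2})), where the two summands are the Cohen–Macaulay modules arising from the 1×1 matrix factorizations (X(Y − 2X^{p/2}))·(Y + 2X^{p/2}) = Δ and (X(Y + 2X^{p/2}))·(Y − 2X^{p/2}) = Δ. -/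
open MvPolynomial

noncomputable section

set_option maxHeartbeats 1000000 in
theorem stmt17 (p : ℕ) (hp : 1 ≤ p) (hpe : Even p) :
    (Xv * (Yv - 2 * Xv ^ (p / 2))) * (Yv + 2 * Xv ^ (p / 2)) = Xv * (Yv ^ 2 - 4 * Xv ^ p) ∧
    (Xv * (Yv + 2 * Xv ^ (p / 2))) * (Yv - 2 * Xv ^ (p / 2)) = Xv * (Yv ^ 2 - 4 * Xv ^ p) ∧
    Nonempty (coker !![Xv * Yv, -2 * Xv ^ (p / 2 + 1); -2 * Xv ^ (p / 2 + 1), Xv * Yv] ≃ₗ[Rpoly]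
      (Rpoly ⧸ Ideal.span {Xv * (Yv - 2 * Xv ^ (p / 2))}) ×
      (Rpoly ⧸ Ideal.span {Xv * (Yv + 2 * Xv ^ (p / 2))})) := by
  obtain ⟨k, hk⟩ := hpe
  have hq2 : p / 2 + p / 2 = p := by omega
  have hpp : Xv ^ (p / 2) * Xv ^ (p / 2) = Xv ^ p := by rw [← pow_add, hq2]
  have h2 : (C (1/2 : ℂ) : Rpoly) * 2 = 1 := by
    have h : (2 : Rpoly) = C (2 : ℂ) := (map_ofNat C 2).symm
    rw [h, ← map_mul]
    norm_num
  refine ⟨by linear_combination (-4 * Xv) * hpp, by linear_combination (-4 * Xv) * hpp, ⟨?_⟩⟩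
  set I : Ideal Rpoly := Ideal.span {Xv * (Yv - 2 * Xv ^ (p / 2))} with hI
  set J : Ideal Rpoly := Ideal.span {Xv * (Yv + 2 * Xv ^ (p / 2))} with hJ
  set F : (Fin 2 → Rpoly) →ₗ[Rpoly] (Rpoly ⧸ I) × (Rpoly ⧸ J) :=
    (I.mkQ ∘ₗ ((LinearMap.proj 0 : (Fin 2 → Rpoly) →ₗ[Rpoly] Rpoly) + LinearMap.proj 1)).prod
      (J.mkQ ∘ₗ ((LinearMap.proj 0 : (Fin 2 → Rpoly) →ₗ[Rpoly] Rpoly) - LinearMap.proj 1)) with hF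
  have hsurj : Function.Surjective F := by
    rintro ⟨x, y⟩
    obtain ⟨u, rfl⟩ := Submodule.Quotient.mk_surjective I x
    obtain ⟨v, rfl⟩ := Submodule.Quotient.mk_surjective J y
    refine ⟨![C (1/2 : ℂ) * (u + v), C (1/2 : ℂ) * (u - v)], ?_⟩
    have e1 : C (1/2 : ℂ) * (u + v) + C (1/2 : ℂ) * (u - v) = u := by
      linear_combination u * h2
    have e2 : C (1/2 : ℂ) * (u + v) - C (1/2 : ℂ) * (u - v) = v := by
      linear_combination v * h2
    simp only [hF, LinearMap.prod_apply, LinearMap.comp_apply, LinearMap.add_apply,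
      LinearMap.sub_apply, LinearMap.proj_apply, Matrix.cons_val_zero, Matrix.cons_val_one,
      Matrix.head_cons, Submodule.mkQ_apply, Function.prod, e1, e2]
  have hmul : ∀ c : Fin 2 → Rpoly,
      (!![Xv * Yv, -2 * Xv ^ (p / 2 + 1); -2 * Xv ^ (p / 2 + 1), Xv * Yv]).mulVecLin c
        = ![Xv * Yv * c 0 + (-2 * Xv ^ (p / 2 + 1)) * c 1,
            (-2 * Xv ^ (p / 2 + 1)) * c 0 + Xv * Yv * c 1] := by
    intro c
    funext i
    fin_cases i <;>
      simp [Matrix.mulVecLin_apply, Matrix.mulVec, dotProduct, Fin.sum_univ_two]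
  have hker : LinearMap.range
      (!![Xv * Yv, -2 * Xv ^ (p / 2 + 1); -2 * Xv ^ (p / 2 + 1), Xv * Yv]).mulVecLin
      = LinearMap.ker F := by
    apply le_antisymm
    · rintro _ ⟨c, rfl⟩
      rw [hmul c]
      simp only [LinearMap.mem_ker, hF, LinearMap.prod_apply, LinearMap.comp_apply,
        LinearMap.add_apply, LinearMap.sub_apply, LinearMap.proj_apply,
        Matrix.cons_val_zero, Matrix.cons_val_one, Matrix.head_cons,
        Submodule.mkQ_apply, Function.prod, Prod.mk_eq_zero, Submodule.Quotient.mk_eq_zero]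
      constructor
      · rw [hI, Ideal.mem_span_singleton]
        exact ⟨c 0 + c 1, by ring⟩
      · rw [hJ, Ideal.mem_span_singleton]
        exact ⟨c 0 - c 1, by ring⟩
    · intro w hw
      simp only [LinearMap.mem_ker, hF, LinearMap.prod_apply, LinearMap.comp_apply,
        LinearMap.add_apply, LinearMap.sub_apply, LinearMap.proj_apply,
        Submodule.mkQ_apply, Function.prod, Prod.mk_eq_zero, Submodule.Quotient.mk_eq_zero,
        hI, hJ, Ideal.mem_span_singleton] at hw
      obtain ⟨⟨s, hs⟩, ⟨t, ht⟩⟩ := hw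
      refine ⟨![C (1/2 : ℂ) * (s + t), C (1/2 : ℂ) * (s - t)], ?_⟩
      rw [hmul]
      funext i
      fin_cases i <;>
        simp only [Matrix.cons_val_zero, Matrix.cons_val_one, Matrix.head_cons, Fin.isValue,
          Fin.zero_eta, Fin.mk_one]
      · linear_combination (-(C (1/2 : ℂ))) * hs - (C (1/2 : ℂ)) * ht + (w 0) * h2
      · linear_combination (-(C (1/2 : ℂ))) * hs + (C (1/2 : ℂ)) * ht + (w 1) * h2
  exact (Submodule.quotEquivOfEq _ _ hker).trans (F.quotKerEquivOfSurjective hsurj)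
end
end
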